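/- arXiv:1512.07089 — 5 statements merged into one kernel-verified Lean document; each statement's English description precedes it below -/
import Mathlib

section
/- For every integer d ≥ 1, one has (d/(d+2)) · 4π² · 2^{2/d} / ω_d^{2/d} ≥ 4, where ω_d = π^{d/2} / Γ(d/2 + 1) is the volume of the unit ball in ℝ^d. -/
open Real

lemma gamma_half_ge (n : ℕ) : (1:ℝ)/2 ≤ Real.Gamma ((n:ℝ)/2 + 1) := by
  induction n using Nat.strong_induction_on with
  | _ n ih =>
    match n with
    | 0 => simp [Real.Gamma_one]; norm_num
    | 1 =>
        rw [show ((1:ℕ):ℝ)/2 + 1 = 1/2 + 1 by norm_num,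
          Real.Gamma_add_one (by norm_num), Real.Gamma_one_half_eq]
        have h1 : (1:ℝ) ≤ Real.sqrt Real.pi := by
          rw [show (1:ℝ) = Real.sqrt 1 by simp]
          exact Real.sqrt_le_sqrt (by linarith [Real.pi_gt_three])
        nlinarith
    | (m+2) =>
        have key : ((m+2:ℕ):ℝ)/2 + 1 = ((m:ℝ)/2 + 1) + 1 := by push_cast; ring
        have hpos : ((m:ℝ)/2 + 1) ≠ 0 := by positivity
        rw [key, Real.Gamma_add_one hpos]
        have ihm := ih m (by omega)
        nlinarith [Nat.cast_nonneg (α := ℝ) m]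

theorem li_yau_constant_ge_four (d : ℕ) (hd : 1 ≤ d)
    (ω : ℝ) (hω : ω = Real.pi ^ ((d : ℝ) / 2) / Real.Gamma ((d : ℝ) / 2 + 1)) :
    ((d : ℝ) / (d + 2)) * (4 * Real.pi ^ 2) * (2 : ℝ) ^ ((2 : ℝ) / d) /
      ω ^ ((2 : ℝ) / d) ≥ 4 := by
  have hd0 : (0:ℝ) < (d:ℝ) := by exact_mod_cast hd
  have hx : 0 < Real.Gamma ((d:ℝ)/2 + 1) := Real.Gamma_pos_of_pos (by positivity)
  set x := Real.Gamma ((d:ℝ)/2 + 1) with hxdef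
  have hπ := Real.pi_gt_three
  have hωpow : ω ^ ((2:ℝ)/d) = Real.pi / x ^ ((2:ℝ)/d) := by
    rw [hω, Real.div_rpow (by positivity) hx.le, ← Real.rpow_mul Real.pi_pos.le]
    rw [show (d:ℝ)/2 * ((2:ℝ)/d) = 1 by field_simp, Real.rpow_one]
  have hxpow : 0 < x ^ ((2:ℝ)/d) := Real.rpow_pos_of_pos hx _
  rw [hωpow]
  have h2x : (2:ℝ) ^ ((2:ℝ)/d) * x ^ ((2:ℝ)/d) = (2*x) ^ ((2:ℝ)/d) :=
    (Real.mul_rpow (by norm_num) hx.le).symm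
  have h2x1 : (1:ℝ) ≤ (2*x) ^ ((2:ℝ)/d) :=
    Real.one_le_rpow (by linarith [gamma_half_ge d]) (by positivity)
  have heq : ((d : ℝ) / (d + 2)) * (4 * Real.pi ^ 2) * (2 : ℝ) ^ ((2 : ℝ) / d) /
      (Real.pi / x ^ ((2:ℝ)/d))
      = ((d : ℝ) / (d + 2)) * (4 * Real.pi) * ((2*x) ^ ((2:ℝ)/d)) := by
    rw [← h2x]
    field_simp
  rw [heq]
  have hfrac : (4:ℝ) ≤ ((d : ℝ) / (d + 2)) * (4 * Real.pi) := by
    rw [div_mul_eq_mul_div, le_div_iff₀ (by positivity)]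
    have hd1 : (1:ℝ) ≤ (d:ℝ) := by exact_mod_cast hd
    nlinarith [hπ, hd1]
  calc (4:ℝ) ≤ ((d : ℝ) / (d + 2)) * (4 * Real.pi) * 1 := by linarith
    _ ≤ _ := by
        apply mul_le_mul_of_nonneg_left h2x1
        positivity
end

section
/- Let N(λ) = #{(m,n) ∈ ℤ²_{>0} : m²/a² + n²/b² < λ} count the Dirichlet eigenvalues (with multiplicity) below λ of the rectangle R(a,b) = (0,aπ)×(0,bπ). Then for all λ ≥ 1/a² + 1/b², N(λ) > (ab π²/(4π)) λ − (1/(2π)) · 2π(a+b) · √λ + 1, i.e. N(λ) > (ab/4) π λ − (a+b) √λ + 1. -/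
open Real

lemma quarter_circle_integral : ∫ x in (0:ℝ)..1, Real.sqrt (1 - x^2) = π/4 := by
  have hsym : ∫ x in (-1:ℝ)..0, Real.sqrt (1 - x^2) = ∫ x in (0:ℝ)..1, Real.sqrt (1 - x^2) := by
    have := intervalIntegral.integral_comp_neg (a := (0:ℝ)) (b := 1) (fun x => Real.sqrt (1 - x^2))
    simp only [neg_sq] at this ⊢
    rw [this]
    norm_num
  have h := integral_sqrt_one_sub_sq
  have hadd : (∫ x in (-1:ℝ)..0, Real.sqrt (1 - x^2)) + ∫ x in (0:ℝ)..1, Real.sqrt (1 - x^2)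
      = ∫ x in (-1:ℝ)..1, Real.sqrt (1 - x^2) := by
    apply intervalIntegral.integral_add_adjacent_intervals <;>
      exact (Continuous.intervalIntegrable (by continuity) _ _)
  rw [hsym] at hadd
  linarith [hadd, h]

lemma quarter_ellipse_integral {A B : ℝ} (hA : 0 < A) :
    ∫ x in (0:ℝ)..A, B * Real.sqrt (1 - x^2/A^2) = π * A * B / 4 := by
  have h1 : ∀ x : ℝ, B * Real.sqrt (1 - x^2/A^2) = B * Real.sqrt (1 - (x/A)^2) := by
    intro x; rw [div_pow]
  simp only [h1]
  rw [intervalIntegral.integral_const_mul]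
  have h2 := intervalIntegral.integral_comp_div (a := (0:ℝ)) (b := A)
    (c := A) (f := fun x => Real.sqrt (1 - x^2)) hA.ne'
  rw [h2, zero_div, div_self hA.ne', quarter_circle_integral]
  simp [smul_eq_mul]; ring

set_option maxHeartbeats 1000000

theorem rectangle_counting_function_lower_bound (a b : ℝ) (ha : 0 < a) (hb : 0 < b)
    (lam : ℝ) (hlam : 1 / a ^ 2 + 1 / b ^ 2 ≤ lam) :
    ((Set.ncard {p : ℕ × ℕ | 0 < p.1 ∧ 0 < p.2 ∧
        (p.1 : ℝ) ^ 2 / a ^ 2 + (p.2 : ℝ) ^ 2 / b ^ 2 < lam} : ℕ) : ℝ)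
      > (a * b / 4) * Real.pi * lam - (a + b) * Real.sqrt lam + 1 := by
  set S := {p : ℕ × ℕ | 0 < p.1 ∧ 0 < p.2 ∧
      (p.1 : ℝ) ^ 2 / a ^ 2 + (p.2 : ℝ) ^ 2 / b ^ 2 < lam} with hSdef
  have hlam0 : 0 < lam := lt_of_lt_of_le (by positivity) hlam
  set s := Real.sqrt lam with hsdef
  have hs : 0 < s := Real.sqrt_pos.mpr hlam0
  have hs2 : s^2 = lam := Real.sq_sqrt hlam0.le
  set A := a * s with hAdef
  set B := b * s with hBdef
  have hA0 : 0 < A := by positivity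
  have hB0 : 0 < B := by positivity
  have hA2 : A^2 = a^2 * lam := by rw [hAdef, mul_pow, hs2]
  have hB2 : B^2 = b^2 * lam := by rw [hBdef, mul_pow, hs2]
  have h1 : 1/A^2 + 1/B^2 ≤ 1 := by
    rw [hA2, hB2, div_mul_eq_div_div, div_mul_eq_div_div, ← add_div,
      div_le_one hlam0]
    exact hlam
  have hiA : 0 < 1/A^2 := by positivity
  have hiB : 0 < 1/B^2 := by positivity
  set f : ℝ → ℝ := fun x => B * Real.sqrt (1 - x^2/A^2) with hfdef
  have hfcont : Continuous f := by
    apply Continuous.mul continuous_const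
    exact Real.continuous_sqrt.comp (by continuity)
  have hfnonneg : ∀ x, 0 ≤ f x := fun x => by
    simp only [hfdef]; positivity
  have hfanti : AntitoneOn f (Set.Ici 0) := by
    intro x hx y hy hxy
    simp only [hfdef]
    apply mul_le_mul_of_nonneg_left _ hB0.le
    apply Real.sqrt_le_sqrt
    have h2 : x^2 ≤ y^2 := by nlinarith [hx.out]
    have h3 : x^2/A^2 ≤ y^2/A^2 := by gcongr
    linarith
  -- membership characterization
  have hmem : ∀ (m n : ℕ), ((n:ℝ) < f m ↔ (m:ℝ)^2/a^2 + (n:ℝ)^2/b^2 < lam) := by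
    intro m n
    have hsq : f m = Real.sqrt (B^2 * (1 - (m:ℝ)^2/A^2)) := by
      simp only [hfdef]
      rw [Real.sqrt_mul (by positivity), Real.sqrt_sq hB0.le]
    rw [hsq, Real.lt_sqrt (Nat.cast_nonneg n)]
    have hb2 : (0:ℝ) < b^2 := by positivity
    have heq : B^2 * (1 - (m:ℝ)^2/A^2) = (lam - (m:ℝ)^2/a^2)*b^2 := by
      rw [hA2, hB2]
      field_simp
    rw [heq, ← div_lt_iff₀ hb2]
    constructor <;> intro h <;> linarith
  -- the threshold x₁ where f = 1
  set x₁ := A * Real.sqrt (1 - 1/B^2) with hx1def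
  have ht0 : (0:ℝ) ≤ 1 - 1/B^2 := by linarith
  have hx1sq : x₁^2 = A^2 * (1 - 1/B^2) := by
    rw [hx1def, mul_pow, Real.sq_sqrt ht0]
  have hx1nonneg : 0 ≤ x₁ := by rw [hx1def]; positivity
  have h1x1 : 1 ≤ x₁ := by
    have hge : 1 ≤ x₁^2 := by
      rw [hx1sq]
      have h4 : A^2 * (1/A^2) ≤ A^2 * (1 - 1/B^2) := by
        apply mul_le_mul_of_nonneg_left (by linarith) (by positivity)
      have h5 : A^2 * (1/A^2) = 1 := by field_simp
      linarith
    nlinarith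
  have hx1A : x₁ ≤ A := by
    rw [hx1def]
    calc A * Real.sqrt (1 - 1/B^2) ≤ A * 1 := by
          apply mul_le_mul_of_nonneg_left (Real.sqrt_le_one.mpr (by linarith)) hA0.le
      _ = A := mul_one A
  have hfx1 : f x₁ = 1 := by
    have heq : 1 - x₁^2/A^2 = 1/B^2 := by
      rw [hx1sq]
      field_simp
      ring
    simp only [hfdef]
    rw [heq, one_div, Real.sqrt_inv, Real.sqrt_sq hB0.le, mul_inv_cancel₀ hB0.ne']
  have hfge1 : ∀ x, 0 ≤ x → x ≤ x₁ → 1 ≤ f x := by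
    intro x hx hxx
    calc (1:ℝ) = f x₁ := hfx1.symm
      _ ≤ f x := hfanti hx hx1nonneg hxx
  have hfle1 : ∀ x, x₁ ≤ x → f x ≤ 1 := by
    intro x hx
    calc f x ≤ f x₁ := hfanti hx1nonneg (le_trans hx1nonneg hx) hx
      _ = 1 := hfx1
  -- the integer cutoff
  set K := Nat.floor x₁ with hKdef
  have hKle : (K:ℝ) ≤ x₁ := Nat.floor_le hx1nonneg
  have hKgt : x₁ < K + 1 := Nat.lt_floor_add_one x₁
  -- fiber counts
  set c : ℕ → ℕ := fun m => ⌈f m⌉₊ - 1 with hcdef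
  have hfm1 : ∀ i : ℕ, i < K → 1 ≤ f (1 + i : ℕ) := by
    intro i hi
    apply hfge1 _ (by positivity)
    have : ((1 + i : ℕ) : ℝ) ≤ (K : ℝ) := by exact_mod_cast Nat.one_add_le_iff.mpr hi
    linarith
  have hceil1 : ∀ i : ℕ, i < K → 1 ≤ ⌈f (1 + i : ℕ)⌉₊ := by
    intro i hi
    exact Nat.one_le_ceil_iff.mpr (by linarith [hfm1 i hi])
  set T : Finset (ℕ × ℕ) := (Finset.range K).biUnion
      (fun i => (Finset.Icc 1 (c (1 + i))).image (fun n => (1 + i, n))) with hTdef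
  have hTcard : T.card = ∑ i ∈ Finset.range K, c (1 + i) := by
    rw [hTdef, Finset.card_biUnion]
    · apply Finset.sum_congr rfl
      intro i _
      rw [Finset.card_image_of_injective _ (fun n n' h => by simpa using h)]
      simp [Nat.card_Icc]
    · intro i _ j _ hij
      simp only [Function.onFun, Finset.disjoint_left]
      rintro p hp hq
      obtain ⟨n, -, rfl⟩ := Finset.mem_image.mp hp
      obtain ⟨n', -, h'⟩ := Finset.mem_image.mp hq
      apply hij
      have h2 := (Prod.mk.injEq _ _ _ _).mp h'
      omega
  have hTS : ↑T ⊆ S := by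
    rintro ⟨m, n⟩ hp
    obtain ⟨i, hi, hmem'⟩ := Finset.mem_biUnion.mp hp
    obtain ⟨n', hn', heq'⟩ := Finset.mem_image.mp hmem'
    obtain ⟨rfl, rfl⟩ := Prod.mk.injEq .. ▸ heq'
    rw [Finset.mem_range] at hi
    rw [Finset.mem_Icc] at hn'
    refine ⟨by omega, by omega, ?_⟩
    apply (hmem (1 + i) n').mp
    apply Nat.lt_ceil.mp
    have := hceil1 i hi
    simp only [hcdef] at hn'
    omega
  have hSfin : S.Finite := by
    apply Set.Finite.subset (Set.finite_Icc ((0:ℕ),(0:ℕ)) (⌈A⌉₊, ⌈B⌉₊))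
    rintro ⟨m, n⟩ ⟨hm, hn, hineq⟩
    have ha2 : (0:ℝ) < a^2 := by positivity
    have hb2 : (0:ℝ) < b^2 := by positivity
    have hmA : (m:ℝ) ≤ A := by
      have h6 : ((m:ℝ))^2 < A^2 := by
        rw [hA2]
        have : ((m:ℝ))^2/a^2 < lam := by
          have : (0:ℝ) ≤ (n:ℝ)^2/b^2 := by positivity
          linarith
        calc ((m:ℝ))^2 = ((m:ℝ))^2/a^2 * a^2 := by field_simp
          _ < lam * a^2 := by exact mul_lt_mul_of_pos_right this ha2
          _ = a^2 * lam := mul_comm _ _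
      exact (lt_of_pow_lt_pow_left₀ 2 hA0.le h6).le
    have hnB : (n:ℝ) ≤ B := by
      have h6 : ((n:ℝ))^2 < B^2 := by
        rw [hB2]
        have : ((n:ℝ))^2/b^2 < lam := by
          have : (0:ℝ) ≤ (m:ℝ)^2/a^2 := by positivity
          linarith
        calc ((n:ℝ))^2 = ((n:ℝ))^2/b^2 * b^2 := by field_simp
          _ < lam * b^2 := by exact mul_lt_mul_of_pos_right this hb2
          _ = b^2 * lam := mul_comm _ _
      exact (lt_of_pow_lt_pow_left₀ 2 hB0.le h6).le
    refine Set.mem_Icc.mpr ⟨⟨Nat.zero_le _, Nat.zero_le _⟩, ⟨?_, ?_⟩⟩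
    · exact_mod_cast hmA.trans (Nat.le_ceil A)
    · exact_mod_cast hnB.trans (Nat.le_ceil B)
  have hcard : T.card ≤ S.ncard := by
    rw [← Set.ncard_coe_finset T]
    exact Set.ncard_le_ncard hTS hSfin
  -- sum lower bound by f - 1
  have hsum1 : ∀ i ∈ Finset.range K, f (1 + (i:ℝ)) - 1 ≤ (c (1 + i) : ℝ) := by
    intro i hi
    rw [Finset.mem_range] at hi
    have h1c := hceil1 i hi
    have hc : (c (1 + i) : ℝ) = ((⌈f ((1 + i : ℕ):ℝ)⌉₊ : ℝ)) - 1 := by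
      simp only [hcdef]
      rw [Nat.cast_sub h1c]
      norm_num
    have hcast : ((1 + i : ℕ) : ℝ) = 1 + (i:ℝ) := by push_cast; ring
    rw [hc, ← hcast]
    linarith [Nat.le_ceil (f ((1+i:ℕ):ℝ))]
  set g : ℝ → ℝ := fun x => max (f x - 1) 0 with hgdef
  have hganti : AntitoneOn g (Set.Icc (1:ℝ) (1 + (K:ℝ))) := by
    intro x hx y hy hxy
    simp only [hgdef]
    exact max_le_max (sub_le_sub_right
      (hfanti (le_trans zero_le_one hx.1) (le_trans zero_le_one hy.1) hxy) 1) le_rfl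
  have hcomp := AntitoneOn.integral_le_sum (x₀ := 1) (a := K) (f := g) hganti
  have hsum2 : ∑ i ∈ Finset.range K, g (1 + (i:ℝ)) ≤ ∑ i ∈ Finset.range K, (c (1+i):ℝ) := by
    apply Finset.sum_le_sum
    intro i hi
    simp only [hgdef]
    exact max_le (hsum1 i hi) (Nat.cast_nonneg _)
  have hgcont : Continuous g := by
    simp only [hgdef]
    exact (hfcont.sub continuous_const).max continuous_const
  have hsplitg : ∫ x in (1:ℝ)..(1 + (K:ℝ)), g x
      = (∫ x in (1:ℝ)..x₁, g x) + ∫ x in x₁..(1 + (K:ℝ)), g x :=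
    (intervalIntegral.integral_add_adjacent_intervals (hgcont.intervalIntegrable _ _)
      (hgcont.intervalIntegrable _ _)).symm
  have htail : 0 ≤ ∫ x in x₁..(1 + (K:ℝ)), g x := by
    apply intervalIntegral.integral_nonneg (by linarith)
    intro x _
    exact le_max_right _ _
  have hgmid : ∫ x in (1:ℝ)..x₁, g x = (∫ x in (1:ℝ)..x₁, f x) - (x₁ - 1) := by
    have hcongr : ∫ x in (1:ℝ)..x₁, g x = ∫ x in (1:ℝ)..x₁, (f x - 1) := by
      apply intervalIntegral.integral_congr
      intro x hx
      rw [Set.uIcc_of_le h1x1] at hx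
      simp only [hgdef]
      exact max_eq_left (by linarith [hfge1 x (by linarith [hx.1]) hx.2])
    rw [hcongr, intervalIntegral.integral_sub (hfcont.intervalIntegrable _ _)
      intervalIntegrable_const]
    simp
  have hell : ∫ x in (0:ℝ)..A, f x = π*A*B/4 := by
    simp only [hfdef]
    exact quarter_ellipse_integral hA0
  have hsplit1 : ∫ x in (0:ℝ)..x₁, f x = (∫ x in (0:ℝ)..1, f x) + ∫ x in (1:ℝ)..x₁, f x :=
    (intervalIntegral.integral_add_adjacent_intervals (hfcont.intervalIntegrable _ _)
      (hfcont.intervalIntegrable _ _)).symm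
  have hsplit2 : ∫ x in (0:ℝ)..A, f x = (∫ x in (0:ℝ)..x₁, f x) + ∫ x in x₁..A, f x :=
    (intervalIntegral.integral_add_adjacent_intervals (hfcont.intervalIntegrable _ _)
      (hfcont.intervalIntegrable _ _)).symm
  have htail2 : ∫ x in x₁..A, f x ≤ A - x₁ := by
    have hm : ∫ x in x₁..A, f x ≤ ∫ x in x₁..A, (1:ℝ) := by
      apply intervalIntegral.integral_mono_on hx1A (hfcont.intervalIntegrable _ _)
        intervalIntegrable_const
      intro x hx
      exact hfle1 x hx.1
    simpa using hm
  have hstrict : ∫ x in (0:ℝ)..1, f x < B := by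
    have hBi : (B:ℝ) = ∫ _x in (0:ℝ)..1, (B:ℝ) := by simp
    rw [hBi]
    apply intervalIntegral.integral_lt_integral_of_continuousOn_of_le_of_exists_lt one_pos
      hfcont.continuousOn continuousOn_const
    · intro x _
      simp only [hfdef]
      have hx2 : (0:ℝ) ≤ x^2/A^2 := by positivity
      calc B * Real.sqrt (1 - x^2/A^2) ≤ B * 1 := by
            exact mul_le_mul_of_nonneg_left (Real.sqrt_le_one.mpr (by linarith)) hB0.le
        _ = B := mul_one B
    · refine ⟨1, by norm_num, ?_⟩
      simp only [hfdef]
      have hone : (1:ℝ)^2/A^2 = 1/A^2 := by norm_num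
      rw [hone]
      have hlt : Real.sqrt (1 - 1/A^2) < 1 := by
        rw [Real.sqrt_lt' one_pos]
        nlinarith
      calc B * Real.sqrt (1 - 1/A^2) < B * 1 := mul_lt_mul_of_pos_left hlt hB0
        _ = B := mul_one B
  -- assemble
  have hTr : (T.card:ℝ) = ∑ i ∈ Finset.range K, (c (1+i):ℝ) := by
    rw [hTcard]
    push_cast
    ring
  have hNT : (T.card:ℝ) ≤ (S.ncard:ℝ) := by exact_mod_cast hcard
  have hAB : π*A*B/4 = (a*b/4)*π*lam := by
    have h7 : π*A*B/4 = (a*b/4)*π*s^2 := by rw [hAdef, hBdef]; ring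
    rw [h7, hs2]
  have hABsum : A + B = (a+b)*s := by rw [hAdef, hBdef]; ring
  linarith [hcomp, hsum2, hsplitg, htail, hgmid, hell, hsplit1, hsplit2, htail2, hstrict,
    hTr, hNT, hAB, hABsum, hx1A, h1x1]
end

section
/- The area of the region {(x,y) ∈ ℝ²_{>0} : (x+1)²/a² + (y+1)²/b² < λ} is at least (ab π/4) λ − (a+b)√λ + 1, for λ ≥ 1/a² + 1/b². -/
open Real MeasureTheory Set
open scoped NNReal ENNReal

lemma smul_prod_vol' (c : ℝ≥0) (μ ν : Measure ℝ) [SigmaFinite μ] [SigmaFinite ν] :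
    (c • μ).prod ν = c • (μ.prod ν) := by
  refine (Measure.prod_eq fun s t hs ht => ?_)
  simp only [Measure.smul_apply, Measure.prod_prod, ENNReal.smul_def, smul_eq_mul, mul_assoc]

lemma prod_smul_vol' (c : ℝ≥0) (μ ν : Measure ℝ) [SigmaFinite μ] [SigmaFinite ν] :
    μ.prod (c • ν) = c • (μ.prod ν) := by
  refine (Measure.prod_eq fun s t hs ht => ?_)
  simp only [Measure.smul_apply, Measure.prod_prod, ENNReal.smul_def, smul_eq_mul, mul_assoc]
  ring

lemma map_scale_vol {c d : ℝ} (hc : 0 < c) (hd : 0 < d) :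
    Measure.map (fun p : ℝ × ℝ => (c * p.1, d * p.2)) volume
      = (ENNReal.ofReal c⁻¹ * ENNReal.ofReal d⁻¹) • volume := by
  have hfun : (fun p : ℝ × ℝ => (c * p.1, d * p.2)) = Prod.map (c * ·) (d * ·) := rfl
  rw [Measure.volume_eq_prod ℝ ℝ, hfun,
    ← Measure.map_prod_map _ _ (by fun_prop) (by fun_prop),
    Real.map_volume_mul_left hc.ne', Real.map_volume_mul_left hd.ne',
    abs_of_pos (inv_pos.mpr hc), abs_of_pos (inv_pos.mpr hd)]
  have e1 : ENNReal.ofReal c⁻¹ = ((c⁻¹).toNNReal : ℝ≥0∞) := rfl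
  have e2 : ENNReal.ofReal d⁻¹ = ((d⁻¹).toNNReal : ℝ≥0∞) := rfl
  rw [e1, e2, ← ENNReal.smul_def, ← ENNReal.smul_def, smul_prod_vol', prod_smul_vol',
    smul_smul, ENNReal.smul_def, ENNReal.coe_mul]

lemma vol_unit_disc : volume {p : ℝ × ℝ | p.1 ^ 2 + p.2 ^ 2 < 1} = ENNReal.ofReal π := by
  have h := Complex.volume_preserving_equiv_real_prod.measure_preimage
    (s := {p : ℝ × ℝ | p.1 ^ 2 + p.2 ^ 2 < 1})
    (measurableSet_lt (by fun_prop) measurable_const).nullMeasurableSet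
  have h2 : Complex.measurableEquivRealProd ⁻¹' {p : ℝ × ℝ | p.1 ^ 2 + p.2 ^ 2 < 1}
      = Metric.ball (0 : ℂ) 1 := by
    ext z
    have hnn : (0:ℝ) ≤ z.re * z.re + z.im * z.im :=
      add_nonneg (mul_self_nonneg _) (mul_self_nonneg _)
    simp [Complex.measurableEquivRealProd_apply, Metric.mem_ball, Complex.dist_eq,
      Complex.norm_def, Complex.normSq_apply]
    constructor
    · intro h
      nlinarith [Real.sq_sqrt hnn, Real.sqrt_nonneg (z.re*z.re + z.im*z.im)]
    · intro h
      nlinarith [Real.sq_sqrt hnn, Real.sqrt_nonneg (z.re*z.re + z.im*z.im)]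
  have hpi : ENNReal.ofReal π = (NNReal.pi : ℝ≥0∞) := by
    rw [← NNReal.coe_real_pi, ENNReal.ofReal_coe_nnreal]
  rw [h2] at h
  rw [← h, Complex.volume_ball, hpi]
  simp

lemma vol_ellipse {c d : ℝ} (hc : 0 < c) (hd : 0 < d) :
    volume {p : ℝ × ℝ | (p.1 / c) ^ 2 + (p.2 / d) ^ 2 < 1}
      = ENNReal.ofReal (c * d * π) := by
  set D : Set (ℝ × ℝ) := {p : ℝ × ℝ | p.1 ^ 2 + p.2 ^ 2 < 1} with hD
  have hDm : MeasurableSet D := measurableSet_lt (by fun_prop) measurable_const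
  have hmap := map_scale_vol (inv_pos.mpr hc) (inv_pos.mpr hd)
  have hpre : (fun p : ℝ × ℝ => (c⁻¹ * p.1, d⁻¹ * p.2)) ⁻¹' D
      = {p : ℝ × ℝ | (p.1 / c) ^ 2 + (p.2 / d) ^ 2 < 1} := by
    ext p
    simp [hD, div_eq_inv_mul]
  have happ := Measure.map_apply (μ := (volume : Measure (ℝ × ℝ)))
    (f := fun p : ℝ × ℝ => (c⁻¹ * p.1, d⁻¹ * p.2)) (by fun_prop) hDm
  rw [hmap] at happ
  rw [← hpre, ← happ]
  simp only [inv_inv, Measure.smul_apply, smul_eq_mul]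
  rw [vol_unit_disc, ← ENNReal.ofReal_mul hc.le, ← ENNReal.ofReal_mul (by positivity)]

theorem shifted_ellipse_area_lower_bound (a b : ℝ) (ha : 0 < a) (hb : 0 < b)
    (lam : ℝ) (hlam : 1 / a ^ 2 + 1 / b ^ 2 ≤ lam) :
    (volume {q : ℝ × ℝ | 0 < q.1 ∧ 0 < q.2 ∧
        (q.1 + 1) ^ 2 / a ^ 2 + (q.2 + 1) ^ 2 / b ^ 2 < lam}).toReal
      ≥ (a * b * Real.pi / 4) * lam - (a + b) * Real.sqrt lam + 1 := by
  have hlam0 : 0 < lam := lt_of_lt_of_le (by positivity) hlam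
  set r := Real.sqrt lam with hrdef
  have hr0 : 0 < r := Real.sqrt_pos.mpr hlam0
  have hr2 : r ^ 2 = lam := Real.sq_sqrt hlam0.le
  -- the full ellipse
  set E : Set (ℝ × ℝ) := {p : ℝ × ℝ | p.1 ^ 2 / a ^ 2 + p.2 ^ 2 / b ^ 2 < lam} with hE
  have hEm : MeasurableSet E := measurableSet_lt (by fun_prop) measurable_const
  have hEeq : E = {p : ℝ × ℝ | (p.1 / (a * r)) ^ 2 + (p.2 / (b * r)) ^ 2 < 1} := by
    ext p
    have key : (p.1 / (a * r)) ^ 2 + (p.2 / (b * r)) ^ 2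
        = (p.1 ^ 2 / a ^ 2 + p.2 ^ 2 / b ^ 2) / lam := by
      rw [← hr2]; field_simp
    simp only [hE, mem_setOf_eq, key, div_lt_one hlam0]
  have hEvol : volume E = ENNReal.ofReal (a * r * (b * r) * π) := by
    rw [hEeq, vol_ellipse (by positivity) (by positivity)]
  have hEfin : volume E ≠ ⊤ := by rw [hEvol]; exact ENNReal.ofReal_ne_top
  -- the open quarter
  set Q : Set (ℝ × ℝ) :=
    {p : ℝ × ℝ | 0 < p.1 ∧ 0 < p.2 ∧ p.1 ^ 2 / a ^ 2 + p.2 ^ 2 / b ^ 2 < lam} with hQ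
  have hQm : MeasurableSet Q := by
    have : Q = {p : ℝ × ℝ | 0 < p.1} ∩ ({p : ℝ × ℝ | 0 < p.2} ∩ E) := rfl
    rw [this]
    exact (measurableSet_lt measurable_const (by fun_prop)).inter
      ((measurableSet_lt measurable_const (by fun_prop)).inter hEm)
  have hQsub : Q ⊆ E := fun p hp => hp.2.2
  have hQfin : volume Q ≠ ⊤ := fun h => hEfin (top_le_iff.mp (h ▸ measure_mono hQsub))
  -- reflections
  have hneg : MeasurePreserving (Neg.neg : ℝ → ℝ) volume volume :=
    Measure.measurePreserving_neg _
  have hid : MeasurePreserving (id : ℝ → ℝ) volume volume := MeasurePreserving.id _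
  have hn1 : MeasurePreserving (fun p : ℝ × ℝ => (-p.1, p.2)) volume volume := by
    have := hneg.prod hid
    rwa [← Measure.volume_eq_prod ℝ ℝ] at this
  have hn2 : MeasurePreserving (fun p : ℝ × ℝ => (p.1, -p.2)) volume volume := by
    have := hid.prod hneg
    rwa [← Measure.volume_eq_prod ℝ ℝ] at this
  have hn3 : MeasurePreserving (fun p : ℝ × ℝ => (-p.1, -p.2)) volume volume := by
    have := hneg.prod hneg
    rwa [← Measure.volume_eq_prod ℝ ℝ] at this
  have hvol1 : volume ((fun p : ℝ × ℝ => (-p.1, p.2)) ⁻¹' Q) = volume Q :=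
    hn1.measure_preimage hQm.nullMeasurableSet
  have hvol2 : volume ((fun p : ℝ × ℝ => (p.1, -p.2)) ⁻¹' Q) = volume Q :=
    hn2.measure_preimage hQm.nullMeasurableSet
  have hvol3 : volume ((fun p : ℝ × ℝ => (-p.1, -p.2)) ⁻¹' Q) = volume Q :=
    hn3.measure_preimage hQm.nullMeasurableSet
  have hax1 : volume {p : ℝ × ℝ | p.1 = 0} = 0 := by
    have : {p : ℝ × ℝ | p.1 = 0} = ({0} : Set ℝ) ×ˢ (univ : Set ℝ) := by
      ext p
      constructor
      · intro h; exact ⟨h, trivial⟩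
      · rintro ⟨h, -⟩; exact h
    rw [this, Measure.volume_eq_prod ℝ ℝ, Measure.prod_prod]
    simp
  have hax2 : volume {p : ℝ × ℝ | p.2 = 0} = 0 := by
    have : {p : ℝ × ℝ | p.2 = 0} = (univ : Set ℝ) ×ˢ ({0} : Set ℝ) := by
      ext p
      constructor
      · intro h; exact ⟨trivial, h⟩
      · rintro ⟨-, h⟩; exact h
    rw [this, Measure.volume_eq_prod ℝ ℝ, Measure.prod_prod]
    simp
  have hcover : E ⊆ Q ∪ ((fun p : ℝ × ℝ => (-p.1, p.2)) ⁻¹' Q ∪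
      ((fun p : ℝ × ℝ => (p.1, -p.2)) ⁻¹' Q ∪
      ((fun p : ℝ × ℝ => (-p.1, -p.2)) ⁻¹' Q ∪
      ({p : ℝ × ℝ | p.1 = 0} ∪ {p : ℝ × ℝ | p.2 = 0})))) := by
    intro p hp
    simp only [hE, mem_setOf_eq] at hp
    rcases lt_trichotomy p.1 0 with h1 | h1 | h1
    · rcases lt_trichotomy p.2 0 with h2 | h2 | h2
      · refine Or.inr (Or.inr (Or.inr (Or.inl ?_)))
        simp only [mem_preimage, hQ, mem_setOf_eq, neg_sq]
        exact ⟨by linarith, by linarith, hp⟩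
      · exact Or.inr (Or.inr (Or.inr (Or.inr (Or.inr h2))))
      · refine Or.inr (Or.inl ?_)
        simp only [mem_preimage, hQ, mem_setOf_eq, neg_sq]
        exact ⟨by linarith, h2, hp⟩
    · exact Or.inr (Or.inr (Or.inr (Or.inr (Or.inl h1))))
    · rcases lt_trichotomy p.2 0 with h2 | h2 | h2
      · refine Or.inr (Or.inr (Or.inl ?_))
        simp only [mem_preimage, hQ, mem_setOf_eq, neg_sq]
        exact ⟨h1, by linarith, hp⟩
      · exact Or.inr (Or.inr (Or.inr (Or.inr (Or.inr h2))))
      · exact Or.inl ⟨h1, h2, hp⟩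
  have h4 : volume E ≤ 4 * volume Q := by
    calc volume E ≤ _ := measure_mono hcover
      _ ≤ volume Q + volume ((fun p : ℝ × ℝ => (-p.1, p.2)) ⁻¹' Q ∪
          ((fun p : ℝ × ℝ => (p.1, -p.2)) ⁻¹' Q ∪
          ((fun p : ℝ × ℝ => (-p.1, -p.2)) ⁻¹' Q ∪
          ({p : ℝ × ℝ | p.1 = 0} ∪ {p : ℝ × ℝ | p.2 = 0})))) := measure_union_le _ _
      _ ≤ volume Q + (volume ((fun p : ℝ × ℝ => (-p.1, p.2)) ⁻¹' Q) +
          (volume ((fun p : ℝ × ℝ => (p.1, -p.2)) ⁻¹' Q) +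
          (volume ((fun p : ℝ × ℝ => (-p.1, -p.2)) ⁻¹' Q) +
          (volume {p : ℝ × ℝ | p.1 = 0} + volume {p : ℝ × ℝ | p.2 = 0})))) := by
        gcongr
        refine (measure_union_le _ _).trans ?_
        gcongr
        refine (measure_union_le _ _).trans ?_
        gcongr
        refine (measure_union_le _ _).trans ?_
        gcongr
        exact measure_union_le _ _
      _ = 4 * volume Q := by
        rw [hvol1, hvol2, hvol3, hax1, hax2]
        ring
  -- strips
  set B1 : Set (ℝ × ℝ) := Q ∩ {p : ℝ × ℝ | p.1 ≤ 1} with hB1def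
  set B2 : Set (ℝ × ℝ) := Q ∩ {p : ℝ × ℝ | p.2 ≤ 1} with hB2def
  have hB1m : MeasurableSet B1 :=
    hQm.inter (measurableSet_le (by fun_prop) measurable_const)
  have hB2m : MeasurableSet B2 :=
    hQm.inter (measurableSet_le (by fun_prop) measurable_const)
  have hB1sub : B1 ⊆ Ioc (0:ℝ) 1 ×ˢ Ioc (0:ℝ) (b * r) := by
    rintro p ⟨⟨h1, h2, h3⟩, h4⟩
    refine ⟨⟨h1, h4⟩, h2, ?_⟩
    have key : p.2 ^ 2 / b ^ 2 < lam :=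
      lt_of_le_of_lt (le_add_of_nonneg_left (by positivity)) h3
    have key2 : p.2 ^ 2 < lam * b ^ 2 := by
      rwa [div_lt_iff₀ (by positivity)] at key
    have hsq : p.2 ^ 2 < (b * r) ^ 2 := by
      rw [mul_pow, hr2]; linarith
    exact (lt_of_pow_lt_pow_left₀ 2 (by positivity) hsq).le
  have hB2sub : B2 ⊆ Ioc (0:ℝ) (a * r) ×ˢ Ioc (0:ℝ) 1 := by
    rintro p ⟨⟨h1, h2, h3⟩, h4⟩
    refine ⟨⟨h1, ?_⟩, h2, h4⟩
    have key : p.1 ^ 2 / a ^ 2 < lam :=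
      lt_of_le_of_lt (le_add_of_nonneg_right (by positivity)) h3
    have key2 : p.1 ^ 2 < lam * a ^ 2 := by
      rwa [div_lt_iff₀ (by positivity)] at key
    have hsq : p.1 ^ 2 < (a * r) ^ 2 := by
      rw [mul_pow, hr2]; linarith
    exact (lt_of_pow_lt_pow_left₀ 2 (by positivity) hsq).le
  have hB1vol : volume B1 ≤ ENNReal.ofReal (b * r) := by
    refine (measure_mono hB1sub).trans ?_
    rw [Measure.volume_eq_prod ℝ ℝ, Measure.prod_prod, Real.volume_Ioc, Real.volume_Ioc]
    simp
  have hB2vol : volume B2 ≤ ENNReal.ofReal (a * r) := by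
    refine (measure_mono hB2sub).trans ?_
    rw [Measure.volume_eq_prod ℝ ℝ, Measure.prod_prod, Real.volume_Ioc, Real.volume_Ioc]
    simp
  have hIsub : Ioo (0:ℝ) 1 ×ˢ Ioo (0:ℝ) 1 ⊆ B1 ∩ B2 := by
    rintro p ⟨⟨h1, h2⟩, h3, h4⟩
    have ha2 : (0:ℝ) < a ^ 2 := by positivity
    have hb2 : (0:ℝ) < b ^ 2 := by positivity
    have h11 : p.1 ^ 2 < 1 := by nlinarith
    have h22 : p.2 ^ 2 < 1 := by nlinarith
    have e1 : p.1 ^ 2 / a ^ 2 < 1 / a ^ 2 := by gcongr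
    have e2 : p.2 ^ 2 / b ^ 2 < 1 / b ^ 2 := by gcongr
    have hcond : p.1 ^ 2 / a ^ 2 + p.2 ^ 2 / b ^ 2 < lam := by linarith
    exact ⟨⟨⟨h1, h3, hcond⟩, h2.le⟩, ⟨h1, h3, hcond⟩, h4.le⟩
  have hIvol : (1 : ℝ≥0∞) ≤ volume (B1 ∩ B2) := by
    refine le_trans (le_of_eq ?_) (measure_mono hIsub)
    rw [Measure.volume_eq_prod ℝ ℝ, Measure.prod_prod, Real.volume_Ioo]
    norm_num
  -- the shifted set
  set S' : Set (ℝ × ℝ) :=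
    {p : ℝ × ℝ | 1 < p.1 ∧ 1 < p.2 ∧ p.1 ^ 2 / a ^ 2 + p.2 ^ 2 / b ^ 2 < lam} with hS'
  have hSdiff : S' = Q \ (B1 ∪ B2) := by
    ext p
    simp only [hS', hB1def, hB2def, hQ, mem_setOf_eq, mem_diff, mem_union, mem_inter_iff,
      not_or, not_and, not_le]
    constructor
    · rintro ⟨h1, h2, h3⟩
      exact ⟨⟨by linarith, by linarith, h3⟩, fun _ => h1, fun _ => h2⟩
    · rintro ⟨⟨h1, h2, h3⟩, h4, h5⟩
      exact ⟨h4 ⟨h1, h2, h3⟩, h5 ⟨h1, h2, h3⟩, h3⟩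
  have htrans : {q : ℝ × ℝ | 0 < q.1 ∧ 0 < q.2 ∧
      (q.1 + 1) ^ 2 / a ^ 2 + (q.2 + 1) ^ 2 / b ^ 2 < lam}
      = (fun q : ℝ × ℝ => q + ((1:ℝ), (1:ℝ))) ⁻¹' S' := by
    ext q
    simp only [hS', mem_preimage, mem_setOf_eq, Prod.fst_add, Prod.snd_add]
    constructor
    · rintro ⟨h1, h2, h3⟩
      exact ⟨by linarith, by linarith, h3⟩
    · rintro ⟨h1, h2, h3⟩
      exact ⟨by linarith, by linarith, h3⟩
  have hvolO : volume {q : ℝ × ℝ | 0 < q.1 ∧ 0 < q.2 ∧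
      (q.1 + 1) ^ 2 / a ^ 2 + (q.2 + 1) ^ 2 / b ^ 2 < lam} = volume S' := by
    rw [htrans]
    exact measure_preimage_add_right volume _ S'
  -- measure arithmetic
  have hUsub : B1 ∪ B2 ⊆ Q := union_subset inter_subset_left inter_subset_left
  have hUm : MeasurableSet (B1 ∪ B2) := hB1m.union hB2m
  have hUfin : volume (B1 ∪ B2) ≠ ⊤ :=
    fun h => hQfin (top_le_iff.mp (h ▸ measure_mono hUsub))
  have hB1fin : volume B1 ≠ ⊤ := fun h => hQfin (top_le_iff.mp (h ▸ measure_mono inter_subset_left))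
  have hB2fin : volume B2 ≠ ⊤ := fun h => hQfin (top_le_iff.mp (h ▸ measure_mono inter_subset_left))
  have hIfin : volume (B1 ∩ B2) ≠ ⊤ :=
    fun h => hB1fin (top_le_iff.mp (h ▸ measure_mono inter_subset_left))
  have hdiff : volume S' = volume Q - volume (B1 ∪ B2) := by
    rw [hSdiff]
    exact measure_diff hUsub hUm.nullMeasurableSet hUfin
  have hincl : volume (B1 ∪ B2) + volume (B1 ∩ B2) = volume B1 + volume B2 :=
    measure_union_add_inter B1 hB2m
  -- pass to real numbers
  set vQ := (volume Q).toReal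
  set vU := (volume (B1 ∪ B2)).toReal
  set vI := (volume (B1 ∩ B2)).toReal
  set v1 := (volume B1).toReal
  set v2 := (volume B2).toReal
  have hrS : (volume S').toReal = vQ - vU := by
    rw [hdiff, ENNReal.toReal_sub_of_le (measure_mono hUsub) hQfin]
  have hrIncl : vU + vI = v1 + v2 := by
    rw [← ENNReal.toReal_add hUfin hIfin, ← ENNReal.toReal_add hB1fin hB2fin, hincl]
  have hrQ : (a * b * Real.pi / 4) * lam ≤ vQ := by
    have h1 : a * r * (b * r) * π ≤ 4 * vQ := by
      have := ENNReal.toReal_mono (by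
          refine ENNReal.mul_ne_top (by simp) hQfin) (hEvol ▸ h4)
      rwa [ENNReal.toReal_ofReal (by positivity), ENNReal.toReal_mul,
        ENNReal.toReal_ofNat] at this
    have h2 : a * r * (b * r) * π = (a * b * Real.pi / 4) * lam * 4 := by
      rw [← hr2]; ring
    linarith
  have hrB1 : v1 ≤ b * r := by
    have := ENNReal.toReal_mono ENNReal.ofReal_ne_top hB1vol
    rwa [ENNReal.toReal_ofReal (by positivity)] at this
  have hrB2 : v2 ≤ a * r := by
    have := ENNReal.toReal_mono ENNReal.ofReal_ne_top hB2vol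
    rwa [ENNReal.toReal_ofReal (by positivity)] at this
  have hrI : (1:ℝ) ≤ vI := by
    have := ENNReal.toReal_mono hIfin hIvol
    simpa using this
  rw [hvolO, hrS]
  linarith
end

section
/- For the cube (0,π)³, the Dirichlet eigenvalue counting function N(λ) = #{(l,m,n) ∈ ℤ³_{>0} : l²+m²+n² < λ} satisfies N(λ) > (π/6) λ^{3/2} − (3π/4) λ + 3√(λ−2) − 1 for all λ ≥ 3. -/
open Real MeasureTheory Set
open scoped ENNReal


lemma int01 : ∫ x in (0:ℝ)..1, √(1 - x ^ 2) = π / 4 := by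
  have h1 : IntervalIntegrable (fun x : ℝ => √(1 - x ^ 2)) volume (-1) 0 :=
    (Continuous.intervalIntegrable (by continuity) _ _)
  have h2 : IntervalIntegrable (fun x : ℝ => √(1 - x ^ 2)) volume 0 1 :=
    (Continuous.intervalIntegrable (by continuity) _ _)
  have hsplit := intervalIntegral.integral_add_adjacent_intervals h1 h2
  have heven : (∫ x in (-1:ℝ)..0, √(1 - x ^ 2)) = ∫ x in (0:ℝ)..1, √(1 - x ^ 2) := by
    have := intervalIntegral.integral_comp_neg (a := (0:ℝ)) (b := 1)
      (fun x : ℝ => √(1 - x ^ 2))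
    simp only [neg_sq, neg_zero, neg_neg] at this
    rw [← this]
  rw [heven, integral_sqrt_one_sub_sq] at hsplit
  linarith

lemma core_integral (c : ℝ) (hc : 0 ≤ c) :
    ∫ x in (0:ℝ)..(√c), √(c - x ^ 2) = π / 4 * c := by
  rcases eq_or_lt_of_le hc with h | h
  · simp [← h]
  · have hr : (0:ℝ) < √c := Real.sqrt_pos.mpr h
    have key : ∀ x : ℝ, √(c - x ^ 2) = √c * √(1 - ((√c)⁻¹ * x) ^ 2) := by
      intro x
      have hcx : c - x ^ 2 = (√c) ^ 2 * (1 - ((√c)⁻¹ * x) ^ 2) := by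
        rw [mul_pow, mul_sub, mul_one, Real.sq_sqrt h.le]
        field_simp
        rw [Real.sq_sqrt h.le]
        ring
      rw [hcx, Real.sqrt_mul (sq_nonneg _), Real.sqrt_sq hr.le]
    simp_rw [key]
    rw [intervalIntegral.integral_const_mul]
    have h2 := intervalIntegral.smul_integral_comp_mul_left
      (f := fun x : ℝ => √(1 - x ^ 2)) (a := 0) (b := √c) ((√c)⁻¹)
    rw [mul_zero, inv_mul_cancel₀ hr.ne', int01, smul_eq_mul] at h2
    rw [inv_mul_eq_iff_eq_mul₀ hr.ne'] at h2
    rw [h2, ← mul_assoc, Real.mul_self_sqrt h.le]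
    ring

lemma lint_core (c : ℝ) (hc : 0 ≤ c) :
    ∫⁻ x in Set.Ioc (0:ℝ) (√c), ENNReal.ofReal (√(c - x ^ 2)) = ENNReal.ofReal (π/4 * c) := by
  rw [← ofReal_integral_eq_lintegral_ofReal]
  · rw [← intervalIntegral.integral_of_le (Real.sqrt_nonneg c), core_integral c hc]
  · exact (Continuous.integrableOn_Ioc (by continuity))
  · exact Filter.Eventually.of_forall (fun x => Real.sqrt_nonneg _)

lemma quarter_meas (c : ℝ) :
    MeasurableSet {p : ℝ × ℝ | 0 < p.1 ∧ 0 < p.2 ∧ p.1 ^ 2 + p.2 ^ 2 ≤ c} := by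
  apply MeasurableSet.inter
  · exact measurableSet_lt measurable_const measurable_fst
  apply MeasurableSet.inter
  · exact measurableSet_lt measurable_const measurable_snd
  · exact measurableSet_le ((measurable_fst.pow_const 2).add (measurable_snd.pow_const 2))
      measurable_const

lemma quarter_slice (c : ℝ) (hc : 0 ≤ c) (x : ℝ) :
    volume (Prod.mk x ⁻¹' {p : ℝ × ℝ | 0 < p.1 ∧ 0 < p.2 ∧ p.1 ^ 2 + p.2 ^ 2 ≤ c})
      = (Set.Ioc (0:ℝ) (√c)).indicator (fun x => ENNReal.ofReal (√(c - x ^ 2))) x := by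
  by_cases hx : x ∈ Set.Ioc (0:ℝ) (√c)
  · rw [Set.indicator_of_mem hx]
    have hset : Prod.mk x ⁻¹' {p : ℝ × ℝ | 0 < p.1 ∧ 0 < p.2 ∧ p.1 ^ 2 + p.2 ^ 2 ≤ c}
        = Set.Ioc 0 (√(c - x ^ 2)) := by
      ext y
      simp only [Set.mem_preimage, Set.mem_setOf_eq, Set.mem_Ioc]
      constructor
      · rintro ⟨h1, h2, h3⟩
        exact ⟨h2, (Real.le_sqrt h2.le (by nlinarith)).mpr (by linarith)⟩
      · rintro ⟨h1, h2⟩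
        have hpos : 0 < c - x ^ 2 := by
          by_contra hneg
          push_neg at hneg
          rw [Real.sqrt_eq_zero'.mpr (by linarith)] at h2
          linarith
        have h3 : y ^ 2 ≤ c - x ^ 2 := (Real.le_sqrt h1.le hpos.le).mp h2
        exact ⟨hx.1, h1, by linarith⟩
    rw [hset, Real.volume_Ioc]
    simp
  · rw [Set.indicator_of_notMem hx]
    have hset : Prod.mk x ⁻¹' {p : ℝ × ℝ | 0 < p.1 ∧ 0 < p.2 ∧ p.1 ^ 2 + p.2 ^ 2 ≤ c} = ∅ := by
      ext y
      simp only [Set.mem_preimage, Set.mem_setOf_eq, Set.mem_empty_iff_false, iff_false]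
      rintro ⟨h1, h2, h3⟩
      apply hx
      refine ⟨h1, ?_⟩
      have : x ^ 2 ≤ c := by nlinarith
      nlinarith [Real.sq_sqrt hc, Real.sqrt_nonneg c]
    rw [hset]
    simp

lemma quarter_area (c : ℝ) (hc : 0 ≤ c) :
    volume {p : ℝ × ℝ | 0 < p.1 ∧ 0 < p.2 ∧ p.1 ^ 2 + p.2 ^ 2 ≤ c}
      = ENNReal.ofReal (π/4 * c) := by
  rw [MeasureTheory.Measure.volume_eq_prod, Measure.prod_apply (quarter_meas c)]
  simp_rw [quarter_slice c hc]
  rw [lintegral_indicator measurableSet_Ioc]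
  exact lint_core c hc

lemma poly_integral (lam : ℝ) (h : 0 ≤ lam) :
    ∫ x in (0:ℝ)..(√lam), π/4 * (lam - x ^ 2) = π/6 * lam ^ ((3:ℝ)/2) := by
  have h1 : IntervalIntegrable (fun x : ℝ => lam) volume 0 (√lam) :=
    intervalIntegrable_const
  have h2 : IntervalIntegrable (fun x : ℝ => x ^ 2) volume 0 (√lam) :=
    (Continuous.intervalIntegrable (by continuity) _ _)
  rw [intervalIntegral.integral_const_mul, intervalIntegral.integral_sub h1 h2]
  rw [intervalIntegral.integral_const, integral_pow]
  have h3 : lam ^ ((3:ℝ)/2) = (√lam) ^ (3:ℕ) := by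
    rw [show ((3:ℝ)/2) = (1/2) * ((3:ℕ):ℝ) by norm_num, Real.rpow_mul h,
      ← Real.sqrt_eq_rpow, Real.rpow_natCast]
  rw [h3]
  have h4 : √lam * √lam = lam := Real.mul_self_sqrt h
  have h6 : π * (√lam * lam) = π * √lam ^ 3 := by
    rw [show √lam ^ 3 = √lam * (√lam * √lam) by ring, h4]
  simp only [smul_eq_mul]
  ring_nf
  ring_nf at h6
  linarith

lemma oct_meas (lam : ℝ) :
    MeasurableSet {p : ℝ × ℝ × ℝ | 0 < p.1 ∧ 0 < p.2.1 ∧ 0 < p.2.2 ∧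
      p.1 ^ 2 + p.2.1 ^ 2 + p.2.2 ^ 2 ≤ lam} := by
  apply MeasurableSet.inter
  · exact measurableSet_lt measurable_const measurable_fst
  apply MeasurableSet.inter
  · exact measurableSet_lt measurable_const (measurable_fst.comp measurable_snd)
  apply MeasurableSet.inter
  · exact measurableSet_lt measurable_const (measurable_snd.comp measurable_snd)
  · exact measurableSet_le
      (((measurable_fst.pow_const 2).add
        ((measurable_fst.comp measurable_snd).pow_const 2)).add
        ((measurable_snd.comp measurable_snd).pow_const 2)) measurable_const

lemma oct_slice (lam : ℝ) (hl : 0 ≤ lam) (x : ℝ) :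
    volume (Prod.mk x ⁻¹' {p : ℝ × ℝ × ℝ | 0 < p.1 ∧ 0 < p.2.1 ∧ 0 < p.2.2 ∧
        p.1 ^ 2 + p.2.1 ^ 2 + p.2.2 ^ 2 ≤ lam})
      = (Set.Ioc (0:ℝ) (√lam)).indicator
        (fun x => ENNReal.ofReal (π/4 * (lam - x ^ 2))) x := by
  by_cases hx : x ∈ Set.Ioc (0:ℝ) (√lam)
  · rw [Set.indicator_of_mem hx]
    have hc : 0 ≤ lam - x ^ 2 := by
      have := hx.2
      nlinarith [hx.1, Real.sq_sqrt hl]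
    have hset : Prod.mk x ⁻¹' {p : ℝ × ℝ × ℝ | 0 < p.1 ∧ 0 < p.2.1 ∧ 0 < p.2.2 ∧
        p.1 ^ 2 + p.2.1 ^ 2 + p.2.2 ^ 2 ≤ lam}
        = {q : ℝ × ℝ | 0 < q.1 ∧ 0 < q.2 ∧ q.1 ^ 2 + q.2 ^ 2 ≤ lam - x ^ 2} := by
      ext q
      simp only [Set.mem_preimage, Set.mem_setOf_eq]
      constructor
      · rintro ⟨h1, h2, h3, h4⟩; exact ⟨h2, h3, by linarith⟩
      · rintro ⟨h1, h2, h3⟩; exact ⟨hx.1, h1, h2, by linarith⟩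
    rw [hset, quarter_area _ hc]
  · rw [Set.indicator_of_notMem hx]
    have hset : Prod.mk x ⁻¹' {p : ℝ × ℝ × ℝ | 0 < p.1 ∧ 0 < p.2.1 ∧ 0 < p.2.2 ∧
        p.1 ^ 2 + p.2.1 ^ 2 + p.2.2 ^ 2 ≤ lam} = ∅ := by
      ext q
      simp only [Set.mem_preimage, Set.mem_setOf_eq, Set.mem_empty_iff_false, iff_false]
      rintro ⟨h1, h2, h3, h4⟩
      apply hx
      refine ⟨h1, ?_⟩
      have hx2 : x ^ 2 ≤ lam := by nlinarith
      nlinarith [Real.sq_sqrt hl, Real.sqrt_nonneg lam]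
    rw [hset]; simp

lemma oct_volume (lam : ℝ) (hl : 0 ≤ lam) :
    volume {p : ℝ × ℝ × ℝ | 0 < p.1 ∧ 0 < p.2.1 ∧ 0 < p.2.2 ∧
        p.1 ^ 2 + p.2.1 ^ 2 + p.2.2 ^ 2 ≤ lam}
      = ENNReal.ofReal (π/6 * lam ^ ((3:ℝ)/2)) := by
  rw [MeasureTheory.Measure.volume_eq_prod, Measure.prod_apply (oct_meas lam)]
  simp_rw [oct_slice lam hl]
  rw [lintegral_indicator measurableSet_Ioc]
  rw [← ofReal_integral_eq_lintegral_ofReal]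
  · rw [← intervalIntegral.integral_of_le (Real.sqrt_nonneg lam), poly_integral lam hl]
  · exact (Continuous.integrableOn_Ioc (by continuity))
  · refine (ae_restrict_iff' measurableSet_Ioc).mpr (Filter.Eventually.of_forall ?_)
    intro x hx
    have h0 : x ^ 2 ≤ lam := by nlinarith [hx.1, hx.2, Real.sq_sqrt hl]
    have := Real.pi_pos
    simp only [Pi.zero_apply]
    nlinarith

lemma slab2_volume (lam : ℝ) (hl : 0 ≤ lam) :
    volume {p : ℝ × ℝ × ℝ | 0 < p.1 ∧ (0 < p.2.1 ∧ p.2.1 ≤ 1) ∧ 0 < p.2.2 ∧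
        p.1 ^ 2 + p.2.2 ^ 2 ≤ lam} = ENNReal.ofReal (π/4 * lam) := by
  have hmeas : MeasurableSet {p : ℝ × ℝ × ℝ | 0 < p.1 ∧ (0 < p.2.1 ∧ p.2.1 ≤ 1) ∧ 0 < p.2.2 ∧
      p.1 ^ 2 + p.2.2 ^ 2 ≤ lam} := by
    apply MeasurableSet.inter
    · exact measurableSet_lt measurable_const measurable_fst
    apply MeasurableSet.inter
    · exact MeasurableSet.inter
        (measurableSet_lt measurable_const (measurable_fst.comp measurable_snd))
        (measurableSet_le (measurable_fst.comp measurable_snd) measurable_const)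
    apply MeasurableSet.inter
    · exact measurableSet_lt measurable_const (measurable_snd.comp measurable_snd)
    · exact measurableSet_le
        ((measurable_fst.pow_const 2).add
          ((measurable_snd.comp measurable_snd).pow_const 2)) measurable_const
  rw [MeasureTheory.Measure.volume_eq_prod, Measure.prod_apply hmeas]
  have hslice : ∀ x : ℝ,
      volume (Prod.mk x ⁻¹' {p : ℝ × ℝ × ℝ | 0 < p.1 ∧ (0 < p.2.1 ∧ p.2.1 ≤ 1) ∧ 0 < p.2.2 ∧
        p.1 ^ 2 + p.2.2 ^ 2 ≤ lam})
      = (Set.Ioc (0:ℝ) (√lam)).indicator (fun x => ENNReal.ofReal (√(lam - x ^ 2))) x := by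
    intro x
    by_cases hx : x ∈ Set.Ioc (0:ℝ) (√lam)
    · rw [Set.indicator_of_mem hx]
      have hc : 0 ≤ lam - x ^ 2 := by nlinarith [hx.1, hx.2, Real.sq_sqrt hl]
      have hset : Prod.mk x ⁻¹' {p : ℝ × ℝ × ℝ | 0 < p.1 ∧ (0 < p.2.1 ∧ p.2.1 ≤ 1) ∧ 0 < p.2.2 ∧
          p.1 ^ 2 + p.2.2 ^ 2 ≤ lam} = Set.Ioc (0:ℝ) 1 ×ˢ Set.Ioc 0 (√(lam - x ^ 2)) := by
        ext q
        simp only [Set.mem_preimage, Set.mem_setOf_eq, Set.mem_prod, Set.mem_Ioc]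
        constructor
        · rintro ⟨h1, ⟨h2, h3⟩, h4, h5⟩
          exact ⟨⟨h2, h3⟩, h4, (Real.le_sqrt h4.le hc).mpr (by linarith)⟩
        · rintro ⟨⟨h2, h3⟩, h4, h5⟩
          have hpos : 0 < lam - x ^ 2 := by
            by_contra hneg
            push_neg at hneg
            rw [Real.sqrt_eq_zero'.mpr (by linarith)] at h5
            linarith
          have h6 : q.2 ^ 2 ≤ lam - x ^ 2 := (Real.le_sqrt h4.le hpos.le).mp h5
          exact ⟨hx.1, ⟨h2, h3⟩, h4, by linarith⟩
      rw [hset, MeasureTheory.Measure.volume_eq_prod, Measure.prod_prod,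
        Real.volume_Ioc, Real.volume_Ioc]
      simp
    · rw [Set.indicator_of_notMem hx]
      have hset : Prod.mk x ⁻¹' {p : ℝ × ℝ × ℝ | 0 < p.1 ∧ (0 < p.2.1 ∧ p.2.1 ≤ 1) ∧ 0 < p.2.2 ∧
          p.1 ^ 2 + p.2.2 ^ 2 ≤ lam} = ∅ := by
        ext q
        simp only [Set.mem_preimage, Set.mem_setOf_eq, Set.mem_empty_iff_false, iff_false]
        rintro ⟨h1, h2, h3, h4⟩
        apply hx
        refine ⟨h1, ?_⟩
        have hx2 : x ^ 2 ≤ lam := by nlinarith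
        nlinarith [Real.sq_sqrt hl, Real.sqrt_nonneg lam]
      rw [hset]; simp
  simp_rw [hslice]
  rw [lintegral_indicator measurableSet_Ioc]
  exact lint_core lam hl

/-- volume of slab with third coordinate in (0,1] -/

lemma slab3_volume (lam : ℝ) (hl : 0 ≤ lam) :
    volume {p : ℝ × ℝ × ℝ | 0 < p.1 ∧ 0 < p.2.1 ∧ (0 < p.2.2 ∧ p.2.2 ≤ 1) ∧
        p.1 ^ 2 + p.2.1 ^ 2 ≤ lam} = ENNReal.ofReal (π/4 * lam) := by
  have hmeas : MeasurableSet {p : ℝ × ℝ × ℝ | 0 < p.1 ∧ 0 < p.2.1 ∧ (0 < p.2.2 ∧ p.2.2 ≤ 1) ∧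
      p.1 ^ 2 + p.2.1 ^ 2 ≤ lam} := by
    apply MeasurableSet.inter
    · exact measurableSet_lt measurable_const measurable_fst
    apply MeasurableSet.inter
    · exact measurableSet_lt measurable_const (measurable_fst.comp measurable_snd)
    apply MeasurableSet.inter
    · exact MeasurableSet.inter
        (measurableSet_lt measurable_const (measurable_snd.comp measurable_snd))
        (measurableSet_le (measurable_snd.comp measurable_snd) measurable_const)
    · exact measurableSet_le
        ((measurable_fst.pow_const 2).add
          ((measurable_fst.comp measurable_snd).pow_const 2)) measurable_const
  rw [MeasureTheory.Measure.volume_eq_prod, Measure.prod_apply hmeas]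
  have hslice : ∀ x : ℝ,
      volume (Prod.mk x ⁻¹' {p : ℝ × ℝ × ℝ | 0 < p.1 ∧ 0 < p.2.1 ∧ (0 < p.2.2 ∧ p.2.2 ≤ 1) ∧
        p.1 ^ 2 + p.2.1 ^ 2 ≤ lam})
      = (Set.Ioc (0:ℝ) (√lam)).indicator (fun x => ENNReal.ofReal (√(lam - x ^ 2))) x := by
    intro x
    by_cases hx : x ∈ Set.Ioc (0:ℝ) (√lam)
    · rw [Set.indicator_of_mem hx]
      have hc : 0 ≤ lam - x ^ 2 := by nlinarith [hx.1, hx.2, Real.sq_sqrt hl]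
      have hset : Prod.mk x ⁻¹' {p : ℝ × ℝ × ℝ | 0 < p.1 ∧ 0 < p.2.1 ∧ (0 < p.2.2 ∧ p.2.2 ≤ 1) ∧
          p.1 ^ 2 + p.2.1 ^ 2 ≤ lam} = Set.Ioc (0:ℝ) (√(lam - x ^ 2)) ×ˢ Set.Ioc (0:ℝ) 1 := by
        ext q
        simp only [Set.mem_preimage, Set.mem_setOf_eq, Set.mem_prod, Set.mem_Ioc]
        constructor
        · rintro ⟨h1, h2, ⟨h3, h4⟩, h5⟩
          exact ⟨⟨h2, (Real.le_sqrt h2.le hc).mpr (by linarith)⟩, h3, h4⟩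
        · rintro ⟨⟨h2, h5⟩, h3, h4⟩
          have hpos : 0 < lam - x ^ 2 := by
            by_contra hneg
            push_neg at hneg
            rw [Real.sqrt_eq_zero'.mpr (by linarith)] at h5
            linarith
          have h6 : q.1 ^ 2 ≤ lam - x ^ 2 := (Real.le_sqrt h2.le hpos.le).mp h5
          exact ⟨hx.1, h2, ⟨h3, h4⟩, by linarith⟩
      rw [hset, MeasureTheory.Measure.volume_eq_prod, Measure.prod_prod,
        Real.volume_Ioc, Real.volume_Ioc]
      simp
    · rw [Set.indicator_of_notMem hx]
      have hset : Prod.mk x ⁻¹' {p : ℝ × ℝ × ℝ | 0 < p.1 ∧ 0 < p.2.1 ∧ (0 < p.2.2 ∧ p.2.2 ≤ 1) ∧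
          p.1 ^ 2 + p.2.1 ^ 2 ≤ lam} = ∅ := by
        ext q
        simp only [Set.mem_preimage, Set.mem_setOf_eq, Set.mem_empty_iff_false, iff_false]
        rintro ⟨h1, h2, h3, h4⟩
        apply hx
        refine ⟨h1, ?_⟩
        have hx2 : x ^ 2 ≤ lam := by nlinarith
        nlinarith [Real.sq_sqrt hl, Real.sqrt_nonneg lam]
      rw [hset]; simp
  simp_rw [hslice]
  rw [lintegral_indicator measurableSet_Ioc]
  exact lint_core lam hl

def OctS (lam : ℝ) : Set (ℝ × ℝ × ℝ) :=
  {p | 0 < p.1 ∧ 0 < p.2.1 ∧ 0 < p.2.2 ∧ p.1 ^ 2 + p.2.1 ^ 2 + p.2.2 ^ 2 ≤ lam}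

def ApS (lam : ℝ) : Set (ℝ × ℝ × ℝ) :=
  {p | 1 < p.1 ∧ 1 < p.2.1 ∧ 1 < p.2.2 ∧ p.1 ^ 2 + p.2.1 ^ 2 + p.2.2 ^ 2 ≤ lam}

lemma octS_meas (lam : ℝ) : MeasurableSet (OctS lam) := oct_meas lam

lemma U_bound (lam : ℝ) (h3 : 3 ≤ lam) :
    volume (((OctS lam ∩ {p | p.2.1 ≤ 1}) ∪ (OctS lam ∩ {p | p.2.2 ≤ 1}))
        ∪ (OctS lam ∩ {p | p.1 ≤ 1}))
      + ENNReal.ofReal (3 * √(lam - 2) - 1 + π/32) ≤ ENNReal.ofReal (3 * (π/4 * lam)) := by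
  have hl0 : (0:ℝ) ≤ lam := by linarith
  have hpi := Real.pi_pos
  set s : ℝ := √(lam - 2) with hs_def
  have hs1 : 1 ≤ s := by
    rw [hs_def, show (1:ℝ) = √1 by simp]
    exact Real.sqrt_le_sqrt (by linarith)
  have hs2 : s ^ 2 = lam - 2 := Real.sq_sqrt (by linarith)
  have hs0 : 0 ≤ s := by linarith
  set U1 : Set (ℝ × ℝ × ℝ) := OctS lam ∩ {p | p.1 ≤ 1} with hU1_def
  set U2 : Set (ℝ × ℝ × ℝ) := OctS lam ∩ {p | p.2.1 ≤ 1} with hU2_def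
  set U3 : Set (ℝ × ℝ × ℝ) := OctS lam ∩ {p | p.2.2 ≤ 1} with hU3_def
  have hU1m : MeasurableSet U1 :=
    (octS_meas lam).inter (measurableSet_le measurable_fst measurable_const)
  have hU3m : MeasurableSet U3 :=
    (octS_meas lam).inter
      (measurableSet_le (measurable_snd.comp measurable_snd) measurable_const)
  -- values
  have P_def : ENNReal.ofReal (π/4 * lam) = ENNReal.ofReal (π/4 * lam) := rfl
  -- inclusion-exclusion equalities
  have e2 := measure_union_add_inter (μ := volume) (U2 ∪ U3) hU1m
  have e1 := measure_union_add_inter (μ := volume) U2 hU3m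
  -- bound on pairwise intersection U2 ∩ U3
  have hK23 : ENNReal.ofReal s ≤ volume (U2 ∩ U3) := by
    have hsub : (Set.Ioc 0 s ×ˢ Set.Ioc (0:ℝ) 1 ×ˢ Set.Ioc (0:ℝ) 1) ⊆ U2 ∩ U3 := by
      rintro ⟨x, y, z⟩ ⟨hx, hy, hz⟩
      simp only [Set.mem_Ioc] at hx hy hz
      have hoct : (x, y, z) ∈ OctS lam := by
        refine ⟨hx.1, hy.1, hz.1, ?_⟩
        simp only
        nlinarith [hx.2, hy.2, hz.2, hx.1, hy.1, hz.1]
      exact ⟨⟨hoct, hy.2⟩, ⟨hoct, hz.2⟩⟩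
    refine le_trans (le_of_eq ?_) (measure_mono hsub)
    simp only [MeasureTheory.Measure.volume_eq_prod, Measure.prod_prod, Real.volume_Ioc]
    simp
  -- bound on ((U2 ∪ U3) ∩ U1)
  have hK1 : ENNReal.ofReal (2 * s - 1) ≤ volume ((U2 ∪ U3) ∩ U1) := by
    set T : Set (ℝ × ℝ) := (Set.Ioc (0:ℝ) 1 ×ˢ Set.Ioc 0 s) ∪ (Set.Ioc 0 s ×ˢ Set.Ioc (0:ℝ) 1)
      with hT_def
    have hTvol : volume T = ENNReal.ofReal (2 * s - 1) := by
      have eT := measure_union_add_inter (μ := volume)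
        (t := Set.Ioc 0 s ×ˢ Set.Ioc (0:ℝ) 1) (Set.Ioc (0:ℝ) 1 ×ˢ Set.Ioc 0 s)
        (measurableSet_Ioc.prod measurableSet_Ioc)
      rw [Set.prod_inter_prod, Set.Ioc_inter_Ioc, Set.Ioc_inter_Ioc] at eT
      simp only [max_self, min_eq_left hs1, min_eq_right hs1] at eT
      rw [hT_def]
      rw [MeasureTheory.Measure.volume_eq_prod] at eT ⊢
      rw [Measure.prod_prod, Measure.prod_prod, Measure.prod_prod,
        Real.volume_Ioc, Real.volume_Ioc] at eT
      simp only [sub_zero, ENNReal.ofReal_one, one_mul, mul_one] at eT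
      have h2 : ENNReal.ofReal s + ENNReal.ofReal s = ENNReal.ofReal (2 * s - 1) + 1 := by
        rw [← ENNReal.ofReal_one,
          ← ENNReal.ofReal_add (by linarith : (0:ℝ) ≤ 2 * s - 1) (by norm_num : (0:ℝ) ≤ 1),
          ← ENNReal.ofReal_add hs0 hs0]
        congr 1
        ring
      rw [h2] at eT
      exact (ENNReal.add_left_inj (by simp)).mp eT
    have hsub : (Set.Ioc (0:ℝ) 1 ×ˢ T) ⊆ (U2 ∪ U3) ∩ U1 := by
      rintro ⟨x, y, z⟩ ⟨hx, hyz⟩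
      simp only [Set.mem_Ioc] at hx
      rcases hyz with h | h
      · obtain ⟨hy, hz⟩ := h
        simp only [Set.mem_Ioc] at hy hz
        have hoct : (x, y, z) ∈ OctS lam := by
          refine ⟨hx.1, hy.1, hz.1, ?_⟩
          simp only
          nlinarith [hx.2, hy.2, hz.2, hx.1, hy.1, hz.1]
        exact ⟨Or.inl ⟨hoct, hy.2⟩, ⟨hoct, hx.2⟩⟩
      · obtain ⟨hy, hz⟩ := h
        simp only [Set.mem_Ioc] at hy hz
        have hoct : (x, y, z) ∈ OctS lam := by
          refine ⟨hx.1, hy.1, hz.1, ?_⟩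
          simp only
          nlinarith [hx.2, hy.2, hz.2, hx.1, hy.1, hz.1]
        exact ⟨Or.inr ⟨hoct, hz.2⟩, ⟨hoct, hx.2⟩⟩
    refine le_trans (le_of_eq ?_) (measure_mono hsub)
    rw [MeasureTheory.Measure.volume_eq_prod, Measure.prod_prod, Real.volume_Ioc, hTvol]
    simp
  -- bound on U1 with the extra gap set G
  have hU1G : volume U1 + ENNReal.ofReal (π/32) ≤ ENNReal.ofReal (π/4 * lam) := by
    let Q1 : Set (ℝ × ℝ) := {p | 0 < p.1 ∧ 0 < p.2 ∧ p.1 ^ 2 + p.2 ^ 2 ≤ lam}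
    let Q2 : Set (ℝ × ℝ) := {p | 0 < p.1 ∧ 0 < p.2 ∧ p.1 ^ 2 + p.2 ^ 2 ≤ lam - 1/4}
    let G : Set (ℝ × ℝ × ℝ) := Set.Ioc (1/2 : ℝ) 1 ×ˢ (Q1 \ Q2)
    have hGm : MeasurableSet G :=
      measurableSet_Ioc.prod ((quarter_meas lam).diff (quarter_meas (lam - 1/4)))
    have hGvol : volume G = ENNReal.ofReal (π/32) := by
      have hQsub : Q2 ⊆ Q1 := by
        rintro p ⟨h1, h2, h3⟩
        exact ⟨h1, h2, by linarith⟩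
      have hdiff : volume (Q1 \ Q2) = ENNReal.ofReal (π/16) := by
        rw [measure_diff hQsub (quarter_meas (lam - 1/4)).nullMeasurableSet
          (by rw [show volume Q2 = _ from quarter_area _ (by linarith)]
              exact ENNReal.ofReal_ne_top),
          show volume Q1 = _ from quarter_area _ hl0,
          show volume Q2 = _ from quarter_area _ (by linarith),
          ← ENNReal.ofReal_sub _ (by nlinarith)]
        congr 1
        ring
      rw [show volume G = _ from rfl, MeasureTheory.Measure.volume_eq_prod,
        Measure.prod_prod, Real.volume_Ioc, hdiff, ← ENNReal.ofReal_mul (by norm_num)]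
      congr 1
      ring
    have hdisj : Disjoint U1 G := by
      rw [Set.disjoint_left]
      rintro ⟨x, y, z⟩ hu hg
      obtain ⟨⟨hx1, hy1, hz1, hsum⟩, hxle⟩ := hu
      obtain ⟨hxI, hq1, hq2⟩ := hg
      simp only [Set.mem_Ioc] at hxI
      simp only [Q2, Set.mem_setOf_eq, not_and, not_le] at hq2
      obtain ⟨hy0, hz0, hyz⟩ := hq1
      have := hq2 hy0 hz0
      simp only at hsum
      nlinarith [hxI.1]
    have hsub : U1 ∪ G ⊆ Set.Ioc (0:ℝ) 1 ×ˢ Q1 := by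
      rintro ⟨x, y, z⟩ (hu | hg)
      · obtain ⟨⟨hx1, hy1, hz1, hsum⟩, hxle⟩ := hu
        simp only at hsum
        exact ⟨Set.mem_Ioc.mpr ⟨hx1, hxle⟩, hy1, hz1, by nlinarith⟩
      · obtain ⟨hxI, hq1, _⟩ := hg
        simp only [Set.mem_Ioc] at hxI
        exact ⟨Set.mem_Ioc.mpr ⟨by linarith [hxI.1], hxI.2⟩, hq1⟩
    calc volume U1 + ENNReal.ofReal (π/32)
        = volume U1 + volume G := by rw [hGvol]
      _ = volume (U1 ∪ G) := (measure_union hdisj hGm).symm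
      _ ≤ volume (Set.Ioc (0:ℝ) 1 ×ˢ Q1) := measure_mono hsub
      _ = ENNReal.ofReal (π/4 * lam) := by
          rw [MeasureTheory.Measure.volume_eq_prod, Measure.prod_prod, Real.volume_Ioc,
            show volume Q1 = _ from quarter_area _ hl0]
          simp
  -- bounds on U2 U3
  have hU2le : volume U2 ≤ ENNReal.ofReal (π/4 * lam) := by
    rw [← slab2_volume lam hl0]
    apply measure_mono
    rintro ⟨x, y, z⟩ ⟨⟨hx, hy, hz, hsum⟩, hyle⟩
    simp only at hsum
    exact ⟨hx, ⟨hy, hyle⟩, hz, by nlinarith⟩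
  have hU3le : volume U3 ≤ ENNReal.ofReal (π/4 * lam) := by
    rw [← slab3_volume lam hl0]
    apply measure_mono
    rintro ⟨x, y, z⟩ ⟨⟨hx, hy, hz, hsum⟩, hzle⟩
    simp only at hsum
    exact ⟨hx, hy, ⟨hz, hzle⟩, by nlinarith⟩
  -- assemble
  have hsplit : ENNReal.ofReal (3 * s - 1 + π/32)
      = ENNReal.ofReal (2 * s - 1) + (ENNReal.ofReal s + ENNReal.ofReal (π/32)) := by
    rw [← ENNReal.ofReal_add hs0 (by positivity), ← ENNReal.ofReal_add (by linarith)
      (by positivity)]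
    ring_nf
  have hsplit3 : ENNReal.ofReal (3 * (π/4 * lam))
      = ENNReal.ofReal (π/4 * lam) + (ENNReal.ofReal (π/4 * lam) + ENNReal.ofReal (π/4 * lam)) := by
    rw [← ENNReal.ofReal_add (by positivity) (by positivity),
      ← ENNReal.ofReal_add (by positivity) (by positivity)]
    ring_nf
  rw [hsplit, hsplit3]
  calc volume ((U2 ∪ U3) ∪ U1)
        + (ENNReal.ofReal (2 * s - 1) + (ENNReal.ofReal s + ENNReal.ofReal (π/32)))
      ≤ volume ((U2 ∪ U3) ∪ U1)
        + (volume ((U2 ∪ U3) ∩ U1) + (ENNReal.ofReal s + ENNReal.ofReal (π/32))) := by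
        gcongr
    _ = (volume (U2 ∪ U3) + volume U1) + (ENNReal.ofReal s + ENNReal.ofReal (π/32)) := by
        rw [← add_assoc, e2]
    _ ≤ (volume (U2 ∪ U3) + volume U1) + (volume (U2 ∩ U3) + ENNReal.ofReal (π/32)) := by
        gcongr
    _ = ((volume (U2 ∪ U3) + volume (U2 ∩ U3)) + (volume U1 + ENNReal.ofReal (π/32))) := by
        ring
    _ = ((volume U2 + volume U3) + (volume U1 + ENNReal.ofReal (π/32))) := by rw [e1]
    _ ≤ (ENNReal.ofReal (π/4 * lam) + ENNReal.ofReal (π/4 * lam)) + ENNReal.ofReal (π/4 * lam) :=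
        add_le_add (add_le_add hU2le hU3le) hU1G
    _ = ENNReal.ofReal (π/4 * lam)
        + (ENNReal.ofReal (π/4 * lam) + ENNReal.ofReal (π/4 * lam)) := by ring

lemma Ap_le_card (lam : ℝ) (h3 : 3 ≤ lam) :
    volume (ApS lam) ≤ ((Set.ncard {p : ℕ × ℕ × ℕ | 0 < p.1 ∧ 0 < p.2.1 ∧ 0 < p.2.2 ∧
        ((p.1 : ℝ) ^ 2 + (p.2.1 : ℝ) ^ 2 + (p.2.2 : ℝ) ^ 2 < lam)} : ℕ) : ℝ≥0∞) := by
  classical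
  set S : Set (ℕ × ℕ × ℕ) := {p : ℕ × ℕ × ℕ | 0 < p.1 ∧ 0 < p.2.1 ∧ 0 < p.2.2 ∧
    ((p.1 : ℝ) ^ 2 + (p.2.1 : ℝ) ^ 2 + (p.2.2 : ℝ) ^ 2 < lam)} with hS_def
  -- S is finite
  have hfin : S.Finite := by
    set M : ℕ := ⌈lam⌉₊ with hM
    apply Set.Finite.subset
      (↑(Finset.range (M+1) ×ˢ Finset.range (M+1) ×ˢ Finset.range (M+1)) : Set (ℕ × ℕ × ℕ)).toFinite
    rintro ⟨a, b, c⟩ ⟨h1, h2, h3', h4⟩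
    have hM1 : lam ≤ (M : ℝ) := Nat.le_ceil lam
    simp only [Finset.coe_product, Set.mem_prod, Finset.mem_coe, Finset.mem_range]
    have key : ∀ n : ℕ, 0 < n → (n : ℝ) ^ 2 < lam → n < M + 1 := by
      intro n hn hlt
      have h1n : (1 : ℝ) ≤ (n : ℝ) := by exact_mod_cast hn
      have : (n : ℝ) < lam := by nlinarith
      have : (n : ℝ) < (M : ℝ) + 1 := by linarith
      exact_mod_cast this
    refine ⟨key a h1 (by nlinarith [sq_nonneg ((b:ℝ)), sq_nonneg ((c:ℝ))]),
      key b h2 (by nlinarith [sq_nonneg ((a:ℝ)), sq_nonneg ((c:ℝ))]),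
      key c h3' (by nlinarith [sq_nonneg ((a:ℝ)), sq_nonneg ((b:ℝ))])⟩
  set F : Finset (ℕ × ℕ × ℕ) := hfin.toFinset with hF
  -- cubes
  set cube : ℕ × ℕ × ℕ → Set (ℝ × ℝ × ℝ) := fun p =>
    Set.Ioc (p.1 : ℝ) ((p.1 : ℝ) + 1) ×ˢ Set.Ioc (p.2.1 : ℝ) ((p.2.1 : ℝ) + 1)
      ×ˢ Set.Ioc (p.2.2 : ℝ) ((p.2.2 : ℝ) + 1) with hcube_def
  have hcubevol : ∀ p : ℕ × ℕ × ℕ, volume (cube p) = 1 := by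
    intro p
    rw [hcube_def]
    simp only [MeasureTheory.Measure.volume_eq_prod, Measure.prod_prod, Real.volume_Ioc]
    norm_num
  -- the set is covered by the cubes over F
  have hsubU : ApS lam ⊆ ⋃ p ∈ F, cube p := by
    rintro ⟨x, y, z⟩ hv
    simp only [ApS, Set.mem_setOf_eq] at hv
    obtain ⟨h1, h2, h3', h4⟩ := hv
    have hx0 : 0 < x := by linarith
    have hy0 : 0 < y := by linarith
    have hz0 : 0 < z := by linarith
    have hb1 : 1 < ⌈x⌉₊ := Nat.lt_ceil.mpr (by exact_mod_cast h1)
    have hb2 : 1 < ⌈y⌉₊ := Nat.lt_ceil.mpr (by exact_mod_cast h2)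
    have hb3 : 1 < ⌈z⌉₊ := Nat.lt_ceil.mpr (by exact_mod_cast h3')
    set n1 : ℕ := ⌈x⌉₊ - 1 with hn1
    set n2 : ℕ := ⌈y⌉₊ - 1 with hn2
    set n3 : ℕ := ⌈z⌉₊ - 1 with hn3
    have e1 : (n1 : ℝ) = (⌈x⌉₊ : ℝ) - 1 := by
      rw [hn1, Nat.cast_sub hb1.le]; norm_num
    have e2 : (n2 : ℝ) = (⌈y⌉₊ : ℝ) - 1 := by
      rw [hn2, Nat.cast_sub hb2.le]; norm_num
    have e3 : (n3 : ℝ) = (⌈z⌉₊ : ℝ) - 1 := by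
      rw [hn3, Nat.cast_sub hb3.le]; norm_num
    have hc1 : (⌈x⌉₊ : ℝ) < x + 1 := Nat.ceil_lt_add_one hx0.le
    have hc2 : (⌈y⌉₊ : ℝ) < y + 1 := Nat.ceil_lt_add_one hy0.le
    have hc3 : (⌈z⌉₊ : ℝ) < z + 1 := Nat.ceil_lt_add_one hz0.le
    have hl1 : x ≤ (⌈x⌉₊ : ℝ) := Nat.le_ceil x
    have hl2 : y ≤ (⌈y⌉₊ : ℝ) := Nat.le_ceil y
    have hl3 : z ≤ (⌈z⌉₊ : ℝ) := Nat.le_ceil z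
    have hq1 : (0:ℝ) < (n1 : ℝ) := by
      have : (1:ℝ) < (⌈x⌉₊ : ℝ) := by exact_mod_cast hb1
      rw [e1]; linarith
    have hq2 : (0:ℝ) < (n2 : ℝ) := by
      have : (1:ℝ) < (⌈y⌉₊ : ℝ) := by exact_mod_cast hb2
      rw [e2]; linarith
    have hq3 : (0:ℝ) < (n3 : ℝ) := by
      have : (1:ℝ) < (⌈z⌉₊ : ℝ) := by exact_mod_cast hb3
      rw [e3]; linarith
    have hmem : (n1, n2, n3) ∈ F := by
      rw [hF, Set.Finite.mem_toFinset, hS_def]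
      refine ⟨Nat.sub_pos_of_lt hb1, Nat.sub_pos_of_lt hb2, Nat.sub_pos_of_lt hb3, ?_⟩
      have p1 : (n1 : ℝ) ^ 2 < x ^ 2 := by
        apply pow_lt_pow_left₀ _ hq1.le (by norm_num)
        rw [e1]; linarith
      have p2 : (n2 : ℝ) ^ 2 < y ^ 2 := by
        apply pow_lt_pow_left₀ _ hq2.le (by norm_num)
        rw [e2]; linarith
      have p3 : (n3 : ℝ) ^ 2 < z ^ 2 := by
        apply pow_lt_pow_left₀ _ hq3.le (by norm_num)
        rw [e3]; linarith
      simp only at h4 ⊢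
      nlinarith
    refine Set.mem_biUnion hmem ?_
    rw [hcube_def]
    refine ⟨Set.mem_Ioc.mpr ⟨by rw [e1]; linarith, by rw [e1]; linarith⟩,
      Set.mem_Ioc.mpr ⟨by rw [e2]; linarith, by rw [e2]; linarith⟩,
      Set.mem_Ioc.mpr ⟨by rw [e3]; linarith, by rw [e3]; linarith⟩⟩
  calc volume (ApS lam)
      ≤ volume (⋃ p ∈ F, cube p) := measure_mono hsubU
    _ ≤ ∑ p ∈ F, volume (cube p) := measure_biUnion_finset_le F cube
    _ = (F.card : ℝ≥0∞) := by
        simp only [hcubevol, Finset.sum_const, nsmul_eq_mul, mul_one]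
    _ = ((S.ncard : ℕ) : ℝ≥0∞) := by
        rw [Set.ncard_eq_toFinset_card S hfin]

theorem cube_counting_function_lower_bound (lam : ℝ) (hlam : 3 ≤ lam) :
    ((Set.ncard {p : ℕ × ℕ × ℕ | 0 < p.1 ∧ 0 < p.2.1 ∧ 0 < p.2.2 ∧
        ((p.1 : ℝ) ^ 2 + (p.2.1 : ℝ) ^ 2 + (p.2.2 : ℝ) ^ 2 < lam)} : ℕ) : ℝ)
      > (Real.pi / 6) * lam ^ ((3 : ℝ) / 2) - (3 * Real.pi / 4) * lam
        + 3 * Real.sqrt (lam - 2) - 1 := by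
  have hl0 : (0:ℝ) ≤ lam := by linarith
  have hpi := Real.pi_pos
  set N : ℕ := Set.ncard {p : ℕ × ℕ × ℕ | 0 < p.1 ∧ 0 < p.2.1 ∧ 0 < p.2.2 ∧
    ((p.1 : ℝ) ^ 2 + (p.2.1 : ℝ) ^ 2 + (p.2.2 : ℝ) ^ 2 < lam)} with hN
  have hs1 : 1 ≤ √(lam - 2) := by
    rw [show (1:ℝ) = √1 by simp]
    exact Real.sqrt_le_sqrt (by linarith)
  -- covering : octant ⊆ ApS ∪ slabs
  have hcov : OctS lam ⊆ ApS lam ∪ (((OctS lam ∩ {p | p.2.1 ≤ 1}) ∪ (OctS lam ∩ {p | p.2.2 ≤ 1}))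
      ∪ (OctS lam ∩ {p | p.1 ≤ 1})) := by
    rintro ⟨x, y, z⟩ hp
    obtain ⟨h1, h2, h3, h4⟩ := hp
    by_cases c1 : x ≤ 1
    · exact Or.inr (Or.inr ⟨⟨h1, h2, h3, h4⟩, c1⟩)
    by_cases c2 : y ≤ 1
    · exact Or.inr (Or.inl (Or.inl ⟨⟨h1, h2, h3, h4⟩, c2⟩))
    by_cases c3 : z ≤ 1
    · exact Or.inr (Or.inl (Or.inr ⟨⟨h1, h2, h3, h4⟩, c3⟩))
    · push_neg at c1 c2 c3
      exact Or.inl ⟨c1, c2, c3, h4⟩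
  have hoct : volume (OctS lam) = ENNReal.ofReal (π/6 * lam ^ ((3:ℝ)/2)) := oct_volume lam hl0
  -- main ENNReal inequality
  have key : ENNReal.ofReal (π/6 * lam ^ ((3:ℝ)/2))
      + ENNReal.ofReal (3 * √(lam - 2) - 1 + π/32)
      ≤ (N : ℝ≥0∞) + ENNReal.ofReal (3 * (π/4 * lam)) := by
    calc ENNReal.ofReal (π/6 * lam ^ ((3:ℝ)/2)) + ENNReal.ofReal (3 * √(lam - 2) - 1 + π/32)
        = volume (OctS lam) + ENNReal.ofReal (3 * √(lam - 2) - 1 + π/32) := by rw [hoct]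
      _ ≤ volume (ApS lam ∪ (((OctS lam ∩ {p | p.2.1 ≤ 1}) ∪ (OctS lam ∩ {p | p.2.2 ≤ 1}))
            ∪ (OctS lam ∩ {p | p.1 ≤ 1})))
            + ENNReal.ofReal (3 * √(lam - 2) - 1 + π/32) :=
          add_le_add (measure_mono hcov) le_rfl
      _ ≤ (volume (ApS lam) + volume (((OctS lam ∩ {p | p.2.1 ≤ 1})
            ∪ (OctS lam ∩ {p | p.2.2 ≤ 1})) ∪ (OctS lam ∩ {p | p.1 ≤ 1})))
            + ENNReal.ofReal (3 * √(lam - 2) - 1 + π/32) :=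
          add_le_add (measure_union_le _ _) le_rfl
      _ = volume (ApS lam) + (volume (((OctS lam ∩ {p | p.2.1 ≤ 1})
            ∪ (OctS lam ∩ {p | p.2.2 ≤ 1})) ∪ (OctS lam ∩ {p | p.1 ≤ 1}))
            + ENNReal.ofReal (3 * √(lam - 2) - 1 + π/32)) := by ring
      _ ≤ (N : ℝ≥0∞) + ENNReal.ofReal (3 * (π/4 * lam)) :=
          add_le_add (Ap_le_card lam hlam) (U_bound lam hlam)
  -- convert to a real inequality
  have hreal : π/6 * lam ^ ((3:ℝ)/2) + (3 * √(lam - 2) - 1 + π/32)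
      ≤ (N : ℝ) + 3 * (π/4 * lam) := by
    rw [← ENNReal.ofReal_natCast N,
      ← ENNReal.ofReal_add (by positivity) (by positivity : (0:ℝ) ≤ 3 * (π/4 * lam)),
      ← ENNReal.ofReal_add (by positivity) (by nlinarith : (0:ℝ) ≤ 3 * √(lam - 2) - 1 + π/32)]
      at key
    exact (ENNReal.ofReal_le_ofReal_iff (by positivity)).mp key
  have : (0:ℝ) < π/32 := by linarith
  linarith
end

section
/- Let Ω ⊂ ℝ² be a bounded open set and suppose that for its Dirichlet eigenvalue counting function N(λ) one has N(λ) ≥ (|Ω|/(4π)) λ − β₃ λ^{1/2} ln(λ/λ₂) − β₄ λ^{1/2} for all λ ≥ λ₂ > 0, with β₃, β₄ ≥ 0. Assume also that every Courant-sharp eigenvalue λ_k with k ≥ 2 satisfies N(λ_k) + 1 = k ≤ |Ω| λ_k/(πj²). Then every Courant-sharp eigenvalue λ_k satisfies f(λ_k) ≤ 0, where f(μ) = ((πj² − 4π)/(4π·πj²)) |Ω| μ − β₃ μ^{1/2} ln(μ/λ₂) − β₄ μ^{1/2} + 1, for μ ≥ λ₂; in particular the set of Courant-sharp eigenvalues exceeding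 λ₂ is bounded above. -/
open Real MeasureTheory

/-- The Bessel function of the first kind of order `0`, defined by its power series. -/
noncomputable def besselJ0 (x : ℝ) : ℝ :=
  ∑' n : ℕ, (-1) ^ n / ((Nat.factorial n : ℝ) ^ 2) * (x / 2) ^ (2 * n)

lemma besselJ0_pos {x : ℝ} (hx0 : 0 < x) (hx2 : x ≤ 2) : 0 < besselJ0 x := by
  set t : ℝ := (x / 2) ^ 2 with ht
  have ht0 : 0 < t := by positivity
  have ht1 : t ≤ 1 := by
    have h1 : x / 2 ≤ 1 := by linarith
    have h2 : 0 ≤ x / 2 := by linarith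
    nlinarith
  set a : ℕ → ℝ := fun n => (-1) ^ n / ((Nat.factorial n : ℝ) ^ 2) * t ^ n with ha
  have hbs : besselJ0 x = ∑' n, a n := by
    unfold besselJ0
    congr 1
    funext n
    simp only [ha]
    rw [← pow_mul]
  have hfac : ∀ n : ℕ, (1 : ℝ) ≤ (Nat.factorial n : ℝ) := by
    intro n
    exact_mod_cast Nat.one_le_iff_ne_zero.mpr (Nat.factorial_ne_zero n)
  have hsum : Summable a := by
    apply Summable.of_norm_bounded (Real.summable_pow_div_factorial 1)
    intro n
    have h1 : ‖a n‖ = t ^ n / ((Nat.factorial n : ℝ) ^ 2) := by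
      rw [ha]
      simp only [norm_mul, norm_div, norm_pow, norm_neg, norm_one, one_pow,
        Real.norm_eq_abs]
      rw [abs_of_nonneg ht0.le, abs_of_nonneg (by positivity : (0:ℝ) ≤ (Nat.factorial n : ℝ))]
      ring
    rw [h1, one_pow]
    have h2 : t ^ n ≤ 1 := pow_le_one₀ ht0.le ht1
    have h3 : (Nat.factorial n : ℝ) ≤ (Nat.factorial n : ℝ) ^ 2 := by
      nlinarith [hfac n]
    have h4 : (0:ℝ) < (Nat.factorial n : ℝ) := by positivity
    calc t ^ n / ((Nat.factorial n : ℝ) ^ 2) ≤ 1 / ((Nat.factorial n : ℝ) ^ 2) := by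
          apply div_le_div_of_nonneg_right h2 (by positivity) |>.trans_eq rfl
      _ ≤ 1 / (Nat.factorial n : ℝ) := by
          apply one_div_le_one_div_of_le h4 h3
  have he : Summable (fun k => a (2 * k)) :=
    hsum.comp_injective (fun m n h => by omega)
  have ho : Summable (fun k => a (2 * k + 1)) :=
    hsum.comp_injective (fun m n h => by omega)
  have hkey : ∑' k, (a (2 * k) + a (2 * k + 1)) = ∑' n, a n := by
    rw [Summable.tsum_add he ho]
    exact tsum_even_add_odd he ho
  have haeven : ∀ k : ℕ, a (2 * k) = t ^ (2 * k) / ((Nat.factorial (2 * k) : ℝ) ^ 2) := by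
    intro k
    simp only [ha, pow_mul, neg_one_sq, one_pow]
    ring
  have haodd : ∀ k : ℕ, a (2 * k + 1) = -(t ^ (2 * k + 1) / ((Nat.factorial (2 * k + 1) : ℝ) ^ 2)) := by
    intro k
    simp only [ha, pow_succ, pow_mul, neg_one_sq, one_pow, mul_neg_one]
    ring
  have hg0 : ∀ k : ℕ, 0 ≤ a (2 * k) + a (2 * k + 1) := by
    intro k
    rw [haeven, haodd]
    have h1 : t ^ (2 * k + 1) ≤ t ^ (2 * k) := pow_le_pow_of_le_one ht0.le ht1 (by omega)
    have h2 : ((Nat.factorial (2 * k) : ℝ)) ^ 2 ≤ ((Nat.factorial (2 * k + 1) : ℝ)) ^ 2 := by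
      have := Nat.factorial_le (by omega : 2 * k ≤ 2 * k + 1)
      have : (Nat.factorial (2 * k) : ℝ) ≤ (Nat.factorial (2 * k + 1) : ℝ) := by exact_mod_cast this
      nlinarith [hfac (2 * k)]
    have h3 : (0:ℝ) < ((Nat.factorial (2 * k) : ℝ)) ^ 2 := by positivity
    have h4 : (0:ℝ) < ((Nat.factorial (2 * k + 1) : ℝ)) ^ 2 := by positivity
    have h5 : t ^ (2 * k + 1) / ((Nat.factorial (2 * k + 1) : ℝ)) ^ 2
        ≤ t ^ (2 * k) / ((Nat.factorial (2 * k) : ℝ)) ^ 2 :=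
      div_le_div₀ (by positivity) h1 h3 h2
    linarith
  have hg1 : 0 < a (2 * 1) + a (2 * 1 + 1) := by
    rw [haeven, haodd]
    norm_num [Nat.factorial]
    nlinarith [pow_pos ht0 2, pow_le_pow_of_le_one ht0.le ht1 (by norm_num : 2 ≤ 3)]
  have hsg : Summable (fun k => a (2 * k) + a (2 * k + 1)) := he.add ho
  have : 0 < ∑' k, (a (2 * k) + a (2 * k + 1)) :=
    lt_of_lt_of_le hg1 (Summable.le_tsum hsg 1 (fun m _ => hg0 m))
  rw [hbs, ← hkey]
  exact this


theorem courant_sharp_bounded_above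
    (j : ℝ) (hj : IsLeast {x : ℝ | 0 < x ∧ besselJ0 x = 0} j)
    (Ω : Set (EuclideanSpace ℝ (Fin 2))) (hΩo : IsOpen Ω)
    (hΩb : Bornology.IsBounded Ω) (hΩvol : 0 < (volume Ω).toReal)
    -- `N` is the Dirichlet eigenvalue counting function of `Ω`
    (N : ℝ → ℝ)
    (β₃ β₄ lam₂ : ℝ) (hβ₃ : 0 ≤ β₃) (hβ₄ : 0 ≤ β₄) (hlam₂ : 0 < lam₂)
    -- the lower bound on the counting function
    (hN : ∀ lam : ℝ, lam₂ ≤ lam →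
      N lam ≥ ((volume Ω).toReal / (4 * Real.pi)) * lam
        - β₃ * lam ^ ((1 : ℝ) / 2) * Real.log (lam / lam₂)
        - β₄ * lam ^ ((1 : ℝ) / 2))
    -- `CourantSharp k lam` : `lam` is the `k`-th Dirichlet eigenvalue of `Ω` and some
    -- associated eigenfunction has exactly `k` nodal domains
    (CourantSharp : ℕ → ℝ → Prop)
    (hCS : ∀ (k : ℕ) (lam : ℝ), CourantSharp k lam → 2 ≤ k →
      N lam + 1 = k ∧ (k : ℝ) ≤ (volume Ω).toReal * lam / (Real.pi * j ^ 2))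
    (f : ℝ → ℝ)
    (hf : ∀ μ : ℝ, f μ = ((Real.pi * j ^ 2 - 4 * Real.pi) / (4 * Real.pi * (Real.pi * j ^ 2)))
        * (volume Ω).toReal * μ
        - β₃ * μ ^ ((1 : ℝ) / 2) * Real.log (μ / lam₂)
        - β₄ * μ ^ ((1 : ℝ) / 2) + 1) :
    (∀ (k : ℕ) (lam : ℝ), CourantSharp k lam → 2 ≤ k → lam₂ ≤ lam → f lam ≤ 0) ∧
    BddAbove {lam : ℝ | ∃ k : ℕ, 2 ≤ k ∧ CourantSharp k lam ∧ lam₂ < lam} := by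
  have hπ : (0:ℝ) < Real.pi := Real.pi_pos
  have hj0 : 0 < j := hj.1.1
  have hj2 : 2 < j := by
    by_contra h
    push_neg at h
    exact absurd hj.1.2 (ne_of_gt (besselJ0_pos hj0 h))
  set V : ℝ := (volume Ω).toReal with hV
  clear_value V
  have hπj : (0:ℝ) < Real.pi * j ^ 2 := by positivity
  have part1 : ∀ (k : ℕ) (lam : ℝ), CourantSharp k lam → 2 ≤ k → lam₂ ≤ lam → f lam ≤ 0 := by
    intro k lam hcs hk hlam
    obtain ⟨h1, h2⟩ := hCS k lam hcs hk
    have h3 := hN lam hlam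
    rw [hf]
    have e : ((Real.pi * j ^ 2 - 4 * Real.pi) / (4 * Real.pi * (Real.pi * j ^ 2))) * V * lam
        = V / (4 * Real.pi) * lam - V * lam / (Real.pi * j ^ 2) := by
      field_simp
    rw [e]
    linarith
  refine ⟨part1, ?_⟩
  -- positivity of the leading coefficient
  set A : ℝ := ((Real.pi * j ^ 2 - 4 * Real.pi) / (4 * Real.pi * (Real.pi * j ^ 2))) * V with hA
  have hA0 : 0 < A := by
    apply mul_pos _ hΩvol
    apply div_pos _ (by positivity)
    nlinarith [mul_pos hπ (mul_pos (sub_pos.mpr hj2) (show (0:ℝ) < j + 2 by linarith))]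
  clear_value A
  set L : ℝ := |Real.log lam₂| with hL
  clear_value L
  have hL0 : 0 ≤ L := by rw [hL]; exact abs_nonneg _
  set K : ℝ := 4 * β₃ + β₃ * L + β₄ with hK
  clear_value K
  have hK0 : 0 ≤ K := by rw [hK]; positivity
  set Q : ℝ := K / A + 1 with hQ
  clear_value Q
  have hQ1 : 1 ≤ Q := by
    have : 0 ≤ K / A := div_nonneg hK0 hA0.le
    linarith
  refine ⟨Q ^ 4, fun lam hlam => ?_⟩
  obtain ⟨k, hk, hcs, hlt⟩ := hlam
  have hlam0 : 0 < lam := hlam₂.trans hlt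
  have hf0 : f lam ≤ 0 := part1 k lam hcs hk hlt.le
  set q : ℝ := lam ^ ((1:ℝ)/4) with hq
  have hq0 : 0 < q := Real.rpow_pos_of_pos hlam0 _
  have hq2 : lam ^ ((1:ℝ)/2) = q ^ 2 := by
    rw [hq, ← Real.rpow_natCast (lam ^ ((1:ℝ)/4)) 2, ← Real.rpow_mul hlam0.le]
    norm_num
  have hq4 : lam = q ^ 4 := by
    rw [hq, ← Real.rpow_natCast (lam ^ ((1:ℝ)/4)) 4, ← Real.rpow_mul hlam0.le]
    norm_num
  have hlogq : Real.log q = (1/4) * Real.log lam := Real.log_rpow hlam0 _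
  have hlog : Real.log lam ≤ 4 * q := by
    have := Real.log_le_sub_one_of_pos hq0
    linarith
  have hlog2 : Real.log (lam / lam₂) ≤ 4 * q + L := by
    rw [Real.log_div hlam0.ne' hlam₂.ne']
    have : -Real.log lam₂ ≤ L := by rw [hL]; exact neg_le_abs _
    linarith
  -- key inequality : A * q^4 ≤ β₃ q² (4q + L) + β₄ q²
  have hkey : A * q ^ 4 ≤ β₃ * q ^ 2 * (4 * q + L) + β₄ * q ^ 2 := by
    have h1 := hf lam
    rw [hq2] at h1
    have h2 : A * lam - β₃ * q ^ 2 * Real.log (lam / lam₂) - β₄ * q ^ 2 + 1 ≤ 0 := by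
      rw [hf, hq2] at hf0
      exact hf0
    have h3 : β₃ * q ^ 2 * Real.log (lam / lam₂) ≤ β₃ * q ^ 2 * (4 * q + L) :=
      mul_le_mul_of_nonneg_left hlog2 (by positivity)
    nlinarith [hq4]
  -- conclude q ≤ Q
  by_cases hqQ : q ≤ Q
  · rw [hq4]
    exact pow_le_pow_left₀ hq0.le hqQ 4
  · exfalso
    push_neg at hqQ
    have hq1 : 1 ≤ q := hQ1.trans hqQ.le
    have hKA : K = A * (Q - 1) := by
      rw [hQ]
      field_simp
      ring
    have h23 : q ^ 2 ≤ q ^ 3 := pow_le_pow_right₀ hq1 (by norm_num)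
    have h5 : A * q ^ 4 ≤ K * q ^ 3 := by
      calc A * q ^ 4 ≤ β₃ * q ^ 2 * (4 * q + L) + β₄ * q ^ 2 := hkey
        _ = 4 * β₃ * q ^ 3 + (β₃ * L) * q ^ 2 + β₄ * q ^ 2 := by ring
        _ ≤ 4 * β₃ * q ^ 3 + (β₃ * L) * q ^ 3 + β₄ * q ^ 3 := by
            have a1 := mul_le_mul_of_nonneg_left h23 (mul_nonneg hβ₃ hL0)
            have a2 := mul_le_mul_of_nonneg_left h23 hβ₄
            linarith
        _ = K * q ^ 3 := by rw [hK]; ring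
    have h6 : K * q ^ 3 < A * q ^ 4 := by
      calc K * q ^ 3 = A * (Q - 1) * q ^ 3 := by rw [hKA]
        _ < A * q * q ^ 3 :=
            mul_lt_mul_of_pos_right (mul_lt_mul_of_pos_left (by linarith) hA0) (pow_pos hq0 3)
        _ = A * q ^ 4 := by ring
    linarith
end
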